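/- arXiv:1610.09203 — 4 statements merged into one kernel-verified Lean document; each statement's English description precedes it below -/
import Mathlib

section
/- Let p > 1 and let s, q, V : ℝ³ → (0,∞) be radially symmetric C² functions. Suppose U(x,t) = ψ(|x|,t) x/|x| is a C² solution of s(x)∂ₜ²U + ∇×∇×U + q(x)U ± V(x)|U|^{p−1}U = 0 on ℝ³ × ℝ, where ψ : [0,∞) × ℝ → ℝ is C². Let a : ℝ³ → ℝ be any radially symmetric C² function. Then U_a(x,t) := U(x, t + a(x)) is also a C² solution of the same equation. -/
/-
At each time the field `ψ(|x|, t) x/|x|` is a radial vector field `c(|x|) x`. Away from the origin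
it can be written `h(|x|²) x`, whose Jacobian `h I + 2h' x xᵀ` is symmetric; by continuity of the
Jacobian the same holds at the origin. A field with symmetric Jacobian is curl free, so `∇×∇×U`
drops out and the equation becomes, for each fixed `x`, an ODE in `t` with constant coefficients
`s(x), q(x), V(x)`. Because `a` is radial, `U(·, t + a(·))` is again a radial field at each time,
and the remaining terms at `(x, t)` are those of `U` at `(x, t + a(x))`.
-/

noncomputable section
open Real Filter Topology
open scoped Classical

/-- Three-dimensional Euclidean space. -/
abbrev E3 : Type := EuclideanSpace ℝ (Fin 3)

/-- A function on `ℝ³` is radially symmetric if it depends only on `|x|`. -/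
def IsRadial (f : E3 → ℝ) : Prop := ∀ x y : E3, ‖x‖ = ‖y‖ → f x = f y

/-- Levi-Civita symbol on `Fin 3`. -/
def levi (i j k : Fin 3) : ℝ :=
  if i = j ∨ j = k ∨ i = k then 0 else if j = i + 1 then 1 else -1

/-- Partial derivative `∂ⱼ f` of a scalar function on `ℝ³`. -/
noncomputable def pd (j : Fin 3) (f : E3 → ℝ) (x : E3) : ℝ :=
  fderiv ℝ f x (EuclideanSpace.single j 1)

/-- Curl of a vector field on `ℝ³`: `(∇×F)ᵢ = Σⱼₖ εᵢⱼₖ ∂ⱼFₖ`. -/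
noncomputable def curl (F : E3 → E3) (x : E3) : E3 :=
  (WithLp.equiv 2 (Fin 3 → ℝ)).symm fun i =>
    ∑ j : Fin 3, ∑ k : Fin 3, levi i j k * pd j (fun y => F y k) x

/-- Second time derivative `∂ₜ²U` of a time-dependent vector field. -/
noncomputable def dtt (U : E3 × ℝ → E3) (x : E3) (t : ℝ) : E3 :=
  deriv (deriv (fun σ : ℝ => U (x, σ))) t

open scoped RealInnerProductSpace

def IsRadialField {E : Type*} [NormedAddCommGroup E] [NormedSpace ℝ E] (H : E → E) : Prop :=
  ∃ c : ℝ → ℝ, ∀ y, H y = c ‖y‖ • y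

section RadialField

variable {E : Type*} [NormedAddCommGroup E] [InnerProductSpace ℝ E]

theorem isSymmetric_fderiv_smul_self_of_normSq {h : ℝ → ℝ} {x : E}
    (hh : DifferentiableAt ℝ h (‖x‖ ^ 2)) :
    (fderiv ℝ (fun y : E => h (‖y‖ ^ 2) • y) x : E →ₗ[ℝ] E).IsSymmetric := by
  have hd : HasFDerivAt (fun y : E => h (‖y‖ ^ 2) • y)
      (h (‖x‖ ^ 2) • ContinuousLinearMap.id ℝ E
        + (deriv h (‖x‖ ^ 2) • 2 • innerSL ℝ x).smulRight x) x :=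
    ((hh.hasDerivAt.comp_hasFDerivAt x (hasStrictFDerivAt_norm_sq x).hasFDerivAt).smul
      (hasFDerivAt_id x) :)
  intro v w
  rw [ContinuousLinearMap.coe_coe, hd.fderiv]
  simp only [add_apply, smul_apply,
    ContinuousLinearMap.id_apply, ContinuousLinearMap.smulRight_apply, innerSL_apply_apply,
    inner_add_left, inner_add_right, real_inner_smul_left, real_inner_smul_right, smul_eq_mul]
  rw [real_inner_comm x v]
  ring

theorem IsRadialField.eventuallyEq_smul_self_of_normSq {H : E → E} (hH : IsRadialField H)
    {x : E} (hx : x ≠ 0) (hHx : DifferentiableAt ℝ H x) :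
    ∃ h : ℝ → ℝ, DifferentiableAt ℝ h (‖x‖ ^ 2) ∧
      H =ᶠ[𝓝 x] fun y => h (‖y‖ ^ 2) • y := by
  obtain ⟨c, hc⟩ := hH
  set u : E := ‖x‖⁻¹ • x
  have hu : ‖u‖ = 1 := norm_smul_inv_norm hx
  have hx0 : 0 < ‖x‖ := norm_pos_iff.mpr hx
  -- on `(0, ∞)` the profile `c` is recovered from `H` along the ray through `x`
  refine ⟨fun ρ => ⟪H (√ρ • u), u⟫ / √ρ, ?_, ?_⟩
  · have hsqrt : DifferentiableAt ℝ Real.sqrt (‖x‖ ^ 2) :=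
      (Real.hasDerivAt_sqrt (by positivity)).differentiableAt
    have hray : √(‖x‖ ^ 2) • u = x := by
      rw [Real.sqrt_sq hx0.le, smul_inv_smul₀ hx0.ne']
    refine DifferentiableAt.div ?_ hsqrt (by positivity)
    refine DifferentiableAt.inner ℝ ?_ (differentiableAt_const u)
    rw [← hray] at hHx
    exact hHx.comp (‖x‖ ^ 2) (hsqrt.smul_const u)
  · filter_upwards [isOpen_compl_singleton.mem_nhds hx] with y hy
    have hy0 : 0 < ‖y‖ := norm_pos_iff.mpr hy
    have hray : H (‖y‖ • u) = (c ‖y‖ * ‖y‖) • u := by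
      rw [hc, norm_smul, hu, mul_one, Real.norm_of_nonneg hy0.le, smul_smul]
    simp only [Real.sqrt_sq hy0.le, hray, real_inner_smul_left, real_inner_self_eq_norm_sq, hu]
    rw [hc]
    field_simp

theorem IsRadialField.isSymmetric_fderiv {H : E → E} (hH : IsRadialField H)
    (hC1 : ContDiff ℝ 1 H) (x : E) :
    (fderiv ℝ H x : E →ₗ[ℝ] E).IsSymmetric := by
  rcases subsingleton_or_nontrivial E with _ | _
  · intro v w
    simp [Subsingleton.elim w 0]
  intro v w
  -- symmetry holds off the origin and is a closed condition
  have hsymm := Continuous.ext_on (dense_compl_singleton (0 : E))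
    (f := fun y => ⟪fderiv ℝ H y v, w⟫) (g := fun y => ⟪v, fderiv ℝ H y w⟫)
    (by fun_prop) (by fun_prop) (fun y hy => ?_)
  · exact congrFun hsymm x
  obtain ⟨h, hh, hHh⟩ := hH.eventuallyEq_smul_self_of_normSq hy (hC1.differentiable one_ne_zero y)
  simp only [hHh.fderiv_eq]
  exact isSymmetric_fderiv_smul_self_of_normSq hh v w

end RadialField

theorem pd_eq_fderiv_apply {F : E3 → E3} {x : E3} (hF : DifferentiableAt ℝ F x) (j k : Fin 3) :
    pd j (fun y => F y k) x = fderiv ℝ F x (EuclideanSpace.single j 1) k := by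
  have hproj := ((EuclideanSpace.proj k : E3 →L[ℝ] ℝ).hasFDerivAt.comp x hF.hasFDerivAt).fderiv
  rw [pd, show (fun y => F y k) = EuclideanSpace.proj k ∘ F from rfl, hproj]
  rfl

theorem curl_eq_zero_of_pd_symm {F : E3 → E3} {x : E3}
    (h : ∀ j k : Fin 3, pd j (fun y => F y k) x = pd k (fun y => F y j) x) :
    curl F x = 0 := by
  ext i
  fin_cases i <;>
    simp [curl, Fin.sum_univ_three, levi, h 1 0, h 2 0, h 2 1]

theorem IsRadialField.curl_eq_zero {F : E3 → E3} (hF : IsRadialField F) (hC1 : ContDiff ℝ 1 F) :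
    curl F = 0 := by
  funext x
  have hdiff := hC1.differentiable one_ne_zero x
  refine curl_eq_zero_of_pd_symm fun j k => ?_
  have hsymm := hF.isSymmetric_fderiv hC1 x (EuclideanSpace.single j 1) (EuclideanSpace.single k 1)
  simp only [ContinuousLinearMap.coe_coe, EuclideanSpace.inner_single_right,
    EuclideanSpace.inner_single_left] at hsymm
  simpa [pd_eq_fderiv_apply hdiff] using hsymm

theorem IsRadialField.curl_curl_eq_zero {F : E3 → E3} (hF : IsRadialField F)
    (hC1 : ContDiff ℝ 1 F) : curl (curl F) = 0 := by
  rw [hF.curl_eq_zero hC1]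
  exact IsRadialField.curl_eq_zero ⟨0, fun y => by simp⟩ contDiff_const

theorem dtt_phaseShift (U : E3 × ℝ → E3) (a : E3 → ℝ) (x : E3) (t : ℝ) :
    dtt (fun z : E3 × ℝ => U (z.1, z.2 + a z.1)) x t = dtt U x (t + a x) := by
  have hshift : deriv (fun σ => U (x, σ + a x)) = fun σ => deriv (fun τ => U (x, τ)) (σ + a x) :=
    funext fun σ => deriv_comp_add_const (fun τ => U (x, τ)) (a x) σ
  simp only [dtt, hshift]
  exact deriv_comp_add_const _ (a x) t

theorem IsRadial.exists_eq_comp_norm {a : E3 → ℝ} (ha : IsRadial a) :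
    ∃ α : ℝ → ℝ, ∀ y, a y = α ‖y‖ :=
  ⟨fun r => a (r • EuclideanSpace.single 0 1), fun y =>
    ha _ _ (by rw [norm_smul, PiLp.norm_single, norm_one, mul_one, norm_norm])⟩

theorem phase_shifted_breather_general (p : ℝ) (ε : ℝ) (s q V : E3 → ℝ) (ψ : ℝ × ℝ → ℝ)
    (U : E3 × ℝ → E3)
    (hU : ∀ (x : E3) (t : ℝ), U (x, t) =
      if x = 0 then 0 else (ψ (‖x‖, t) / ‖x‖) • x)
    (hUC2 : ContDiff ℝ 2 U)
    (hPDE : ∀ (x : E3) (t : ℝ),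
      s x • dtt U x t + curl (curl (fun y => U (y, t))) x + q x • U (x, t)
        + ε • (V x • (‖U (x, t)‖ ^ (p - 1) • U (x, t))) = 0)
    (a : E3 → ℝ) (ha_rad : IsRadial a) (ha_C2 : ContDiff ℝ 2 a) :
    ContDiff ℝ 2 (fun z : E3 × ℝ => U (z.1, z.2 + a z.1)) ∧
    (∀ (x : E3) (t : ℝ),
      s x • dtt (fun z : E3 × ℝ => U (z.1, z.2 + a z.1)) x t
        + curl (curl (fun y => U (y, t + a y))) x + q x • U (x, t + a x)
        + ε • (V x • (‖U (x, t + a x)‖ ^ (p - 1) • U (x, t + a x))) = 0) := by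
  have hUψ : ∀ y τ, U (y, τ) = (ψ (‖y‖, τ) / ‖y‖) • y := fun y τ => by
    rw [hU]
    split_ifs with hy <;> simp [hy]
  obtain ⟨α, hα⟩ := ha_rad.exists_eq_comp_norm
  have hUa : ContDiff ℝ 2 (fun z : E3 × ℝ => U (z.1, z.2 + a z.1)) :=
    hUC2.comp (contDiff_fst.prodMk (contDiff_snd.add (ha_C2.comp contDiff_fst)))
  have hslice {W : E3 × ℝ → E3} (hW : ContDiff ℝ 2 W) (τ : ℝ) : ContDiff ℝ 1 fun y => W (y, τ) :=
    (hW.comp (contDiff_id.prodMk contDiff_const)).of_le (by norm_num)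
  refine ⟨hUa, fun x t => ?_⟩
  have hcurl : curl (curl fun y => U (y, t + a x)) = 0 :=
    IsRadialField.curl_curl_eq_zero ⟨fun r => ψ (r, t + a x) / r, fun y => hUψ y _⟩
      (hslice hUC2 _)
  have hcurl_a : curl (curl fun y => U (y, t + a y)) = 0 :=
    IsRadialField.curl_curl_eq_zero
      ⟨fun r => ψ (r, t + α r) / r, fun y => by simp only [hUψ, hα]⟩ (hslice hUa t)
  have hPDE_shifted := hPDE x (t + a x)
  rw [hcurl, Pi.zero_apply] at hPDE_shifted
  rwa [dtt_phaseShift, hcurl_a, Pi.zero_apply]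

/-- Phase shift: if `U(x,t) = ψ(|x|,t)x/|x|` is a C² solution of
`s(x)∂ₜ²U + ∇×∇×U + q(x)U ± V(x)|U|^{p-1}U = 0` and `a : ℝ³ → ℝ` is a radially
symmetric C² function, then `U_a(x,t) = U(x, t + a(x))` is also a C² solution. -/
theorem phase_shifted_breather (p : ℝ) (hp : 1 < p)
    (ε : ℝ) (hε : ε = 1 ∨ ε = -1)  -- the fixed sign ±
    (s q V : E3 → ℝ)
    (hs_pos : ∀ x, 0 < s x) (hq_pos : ∀ x, 0 < q x) (hV_pos : ∀ x, 0 < V x)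
    (hs_rad : IsRadial s) (hq_rad : IsRadial q) (hV_rad : IsRadial V)
    (hs_C2 : ContDiff ℝ 2 s) (hq_C2 : ContDiff ℝ 2 q) (hV_C2 : ContDiff ℝ 2 V)
    (ψ : ℝ × ℝ → ℝ) (hψ : ContDiffOn ℝ 2 ψ (Set.Ici 0 ×ˢ (Set.univ : Set ℝ)))
    (U : E3 × ℝ → E3)
    (hU : ∀ (x : E3) (t : ℝ), U (x, t) =
      if x = 0 then 0 else (ψ (‖x‖, t) / ‖x‖) • x)
    (hUC2 : ContDiff ℝ 2 U)
    (hPDE : ∀ (x : E3) (t : ℝ),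
      s x • dtt U x t + curl (curl (fun y => U (y, t))) x + q x • U (x, t)
        + ε • (V x • (‖U (x, t)‖ ^ (p - 1) • U (x, t))) = 0)
    (a : E3 → ℝ) (ha_rad : IsRadial a) (ha_C2 : ContDiff ℝ 2 a) :
    ContDiff ℝ 2 (fun z : E3 × ℝ => U (z.1, z.2 + a z.1)) ∧
    (∀ (x : E3) (t : ℝ),
      s x • dtt (fun z : E3 × ℝ => U (z.1, z.2 + a z.1)) x t
        + curl (curl (fun y => U (y, t + a y))) x + q x • U (x, t + a x)
        + ε • (V x • (‖U (x, t + a x)‖ ^ (p - 1) • U (x, t + a x))) = 0) :=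
  phase_shifted_breather_general p ε s q V ψ U hU hUC2 hPDE a ha_rad ha_C2
end
end

section
/- Let p > 1, let N : (0,∞) → (0,∞) be defined by N(c)² + (2/(p+1))N(c)^{p+1} = c, and define L(c) = 4∫₀¹ dz/√(1 − z² + (2/(p+1))N(c)^{p−1}(1 − z^{p+1})) for c > 0. Then L is C^∞ on (0,∞), strictly decreasing with L'(c) < 0 for all c > 0, L(c) → 2π as c → 0+, and L(c) → 0 as c → ∞; in particular L maps (0,∞) bijectively onto (0,2π). -/
noncomputable section
open Real Filter Topology Set MeasureTheory intervalIntegral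
open scoped Interval

namespace PeriodLPlus

/-- `A t = 1 - t^2`. -/
def Af (t : ℝ) : ℝ := 1 - t ^ 2
/-- `B t = 1 - t^(p+1)` (rpow). -/
def Bf (p t : ℝ) : ℝ := 1 - t ^ (p + 1)
def fC (p : ℝ) (w : ℂ) (t : ℝ) : ℂ := ((Af t : ℂ) + w * (Bf p t : ℂ)) ^ (-(1/2) : ℂ)
def fC' (p : ℝ) (w : ℂ) (t : ℝ) : ℂ :=
  (-(1/2) : ℂ) * ((Af t : ℂ) + w * (Bf p t : ℂ)) ^ ((-(1/2) : ℂ) - 1) * (Bf p t : ℂ)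
def Phi (p : ℝ) (w : ℂ) : ℂ := ∫ t in (0:ℝ)..1, fC p w t
def Phi' (p : ℝ) (w : ℂ) : ℂ := ∫ t in (0:ℝ)..1, fC' p w t
def Fr (p w : ℝ) : ℝ := ∫ t in (0:ℝ)..1, (Af t + w * Bf p t) ^ (-(1/2) : ℝ)
def F1 (p w : ℝ) : ℝ :=
  ∫ t in (0:ℝ)..1, (-(1/2)) * (Af t + w * Bf p t) ^ ((-(1/2) : ℝ) - 1) * Bf p t
def UC (p : ℝ) : Set ℂ := {w | -(2/(p+1)) < w.re}
def sR (p : ℝ) : Set ℝ := Ioi (-(2/(p+1)))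
def mfun (p σ : ℝ) : ℝ := min 1 (1 + (p+1)/2 * σ)

variable {p : ℝ}

section basics
variable (hp : 1 < p)
include hp

lemma hq0 : (0:ℝ) < p + 1 := by linarith

lemma Af_nonneg {t : ℝ} (ht : t ∈ Icc (0:ℝ) 1) : 0 ≤ Af t := by
  have := ht.1; have := ht.2
  have : t ^ 2 ≤ 1 := by nlinarith
  simp only [Af]; linarith

lemma Af_pos {t : ℝ} (ht : t ∈ Ico (0:ℝ) 1) : 0 < Af t := by
  have := ht.1; have := ht.2
  have : t ^ 2 < 1 := by nlinarith
  simp only [Af]; linarith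

omit hp in
lemma one_sub_le_Af {t : ℝ} (ht : t ∈ Icc (0:ℝ) 1) : 1 - t ≤ Af t := by
  have := ht.1; have := ht.2; simp only [Af]; nlinarith

lemma Bf_nonneg {t : ℝ} (ht : t ∈ Icc (0:ℝ) 1) : 0 ≤ Bf p t := by
  have h : t ^ (p+1) ≤ 1 := Real.rpow_le_one ht.1 ht.2 (hq0 hp).le
  simp only [Bf]; linarith

lemma Bf_pos {t : ℝ} (ht : t ∈ Ioo (0:ℝ) 1) : 0 < Bf p t := by
  have h : t ^ (p+1) < 1 := Real.rpow_lt_one ht.1.le ht.2 (hq0 hp)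
  simp only [Bf]; linarith

lemma Af_le_Bf {t : ℝ} (ht : t ∈ Icc (0:ℝ) 1) : Af t ≤ Bf p t := by
  rcases eq_or_lt_of_le ht.1 with h0 | h0
  · simp [Af, Bf, ← h0, Real.zero_rpow (hq0 hp).ne']
  · have h : t ^ (p+1) ≤ t ^ (2:ℝ) :=
      Real.rpow_le_rpow_of_exponent_ge h0 ht.2 (by linarith)
    have h2 : t ^ (2:ℝ) = t ^ (2:ℕ) := by
      rw [← Real.rpow_natCast t 2]; norm_num
    simp only [Af, Bf]; rw [h2] at h; linarith

lemma Bf_le {t : ℝ} (ht : t ∈ Icc (0:ℝ) 1) : Bf p t ≤ (p+1)/2 * Af t := by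
  -- Bernoulli: 1 + r*s ≤ (1+s)^r  with  s = t^2 - 1 ∈ [-1,0],  r = (p+1)/2 ≥ 1
  have hr : (1:ℝ) ≤ (p+1)/2 := by linarith
  have hs : (-1:ℝ) ≤ t ^ 2 - 1 := by nlinarith [ht.1]
  have hber := one_add_mul_self_le_rpow_one_add hs hr
  have hx : (1 + (t ^ 2 - 1)) = t ^ 2 := by ring
  rw [hx] at hber
  have ht2 : (t ^ 2 : ℝ) ^ ((p+1)/2 : ℝ) = t ^ (p+1) := by
    rw [← Real.rpow_natCast t 2, ← Real.rpow_mul ht.1]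
    norm_num
    congr 1
    ring
  rw [ht2] at hber
  simp only [Af, Bf]; nlinarith

lemma mfun_le_one (σ : ℝ) : mfun p σ ≤ 1 := min_le_left _ _

lemma mfun_pos {σ : ℝ} (hσ : -(2/(p+1)) < σ) : 0 < mfun p σ := by
  have h1 : 0 < (p+1)/2 := by linarith
  have : 0 < 1 + (p+1)/2 * σ := by
    have : (p+1)/2 * (-(2/(p+1))) < (p+1)/2 * σ := by
      exact mul_lt_mul_of_pos_left hσ h1
    have he : (p+1)/2 * (-(2/(p+1))) = -1 := by
      field_simp
    linarith
  exact lt_min one_pos this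

lemma re_bound {t : ℝ} (ht : t ∈ Icc (0:ℝ) 1) {σ : ℝ} {w : ℂ} (hσ : σ ≤ w.re) :
    mfun p σ * Af t ≤ ((Af t : ℂ) + w * (Bf p t : ℂ)).re := by
  have hre : ((Af t : ℂ) + w * (Bf p t : ℂ)).re = Af t + w.re * Bf p t := by
    simp [Complex.add_re, Complex.mul_re]
  rw [hre]
  have hA := Af_nonneg hp ht
  have hB := Bf_nonneg hp ht
  rcases le_or_gt 0 w.re with h0 | h0
  · have : mfun p σ * Af t ≤ 1 * Af t :=
      mul_le_mul_of_nonneg_right (mfun_le_one hp σ) hA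
    nlinarith
  · have hBle := Bf_le hp ht
    have h1 : w.re * Bf p t ≥ w.re * ((p+1)/2 * Af t) := by nlinarith
    have h2 : w.re * ((p+1)/2 * Af t) ≥ σ * ((p+1)/2 * Af t) := by nlinarith [hq0 hp]
    have h3 : mfun p σ * Af t ≤ (1 + (p+1)/2 * σ) * Af t :=
      mul_le_mul_of_nonneg_right (min_le_right _ _) hA
    nlinarith

lemma base_re_pos {t : ℝ} (ht : t ∈ Ico (0:ℝ) 1) {w : ℂ} (hw : w ∈ UC p) :
    0 < ((Af t : ℂ) + w * (Bf p t : ℂ)).re :=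
  lt_of_lt_of_le (mul_pos (mfun_pos hp hw) (Af_pos hp ht))
    (re_bound hp (Ico_subset_Icc_self ht) le_rfl)

lemma base_mem_slitPlane {t : ℝ} (ht : t ∈ Ico (0:ℝ) 1) {w : ℂ} (hw : w ∈ UC p) :
    ((Af t : ℂ) + w * (Bf p t : ℂ)) ∈ Complex.slitPlane :=
  Or.inl (base_re_pos hp ht hw)

lemma base_real_nonneg {t : ℝ} (ht : t ∈ Icc (0:ℝ) 1) {w : ℝ} (hw : w ∈ sR p) :
    0 ≤ Af t + w * Bf p t := by
  have h := re_bound hp ht (σ := w) (w := (w:ℂ)) (by simp)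
  have hre : (((Af t : ℝ) : ℂ) + (w:ℂ) * ((Bf p t : ℝ) : ℂ)).re = Af t + w * Bf p t := by
    simp [Complex.add_re, Complex.mul_re]
  rw [hre] at h
  have := mul_nonneg (mfun_pos hp hw).le (Af_nonneg hp ht)
  linarith

lemma base_real_pos {t : ℝ} (ht : t ∈ Ico (0:ℝ) 1) {w : ℝ} (hw : w ∈ sR p) :
    0 < Af t + w * Bf p t := by
  have h := re_bound hp (Ico_subset_Icc_self ht) (σ := w) (w := (w:ℂ)) (by simp)
  have hre : (((Af t : ℝ) : ℂ) + (w:ℂ) * ((Bf p t : ℝ) : ℂ)).re = Af t + w * Bf p t := by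
    simp [Complex.add_re, Complex.mul_re]
  rw [hre] at h
  have := mul_pos (mfun_pos hp hw) (Af_pos hp ht)
  linarith

end basics

/-! ### Integrability helpers -/

lemma uIoc01 : Ι (0:ℝ) 1 = Ioc (0:ℝ) 1 := uIoc_of_le zero_le_one

lemma restrict_eq_Ioo : (volume : Measure ℝ).restrict (Ι (0:ℝ) 1)
    = (volume : Measure ℝ).restrict (Ioo (0:ℝ) 1) := by
  rw [uIoc01]
  exact (Measure.restrict_congr_set Ioo_ae_eq_Ioc).symm

lemma ae_mem_Ioo : ∀ᵐ t ∂((volume : Measure ℝ).restrict (Ι (0:ℝ) 1)), t ∈ Ioo (0:ℝ) 1 := by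
  rw [restrict_eq_Ioo]
  exact ae_restrict_mem measurableSet_Ioo

lemma ae_imp_Ioo : ∀ᵐ t ∂(volume : Measure ℝ), t ∈ Ι (0:ℝ) 1 → t ∈ Ioo (0:ℝ) 1 := by
  have h1 : ∀ᵐ t ∂(volume : Measure ℝ), t ≠ 1 := by
    rw [MeasureTheory.ae_iff]
    have : {t : ℝ | ¬ t ≠ 1} = {1} := by ext t; simp
    rw [this]
    exact Real.volume_singleton
  filter_upwards [h1] with t ht hti
  rw [uIoc01] at hti
  exact ⟨hti.1, lt_of_le_of_ne hti.2 ht⟩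

lemma aesm_of_contOn {E : Type*} [NormedAddCommGroup E] {g : ℝ → E}
    (h : ContinuousOn g (Ioo (0:ℝ) 1)) :
    AEStronglyMeasurable g ((volume : Measure ℝ).restrict (Ι (0:ℝ) 1)) := by
  rw [restrict_eq_Ioo]
  exact h.aestronglyMeasurable measurableSet_Ioo

lemma Jint : IntervalIntegrable (fun t : ℝ => (1-t) ^ (-(1/2) : ℝ)) volume 0 1 := by
  have h : IntervalIntegrable (fun t : ℝ => t ^ (-(1/2) : ℝ)) volume 0 1 :=
    intervalIntegral.intervalIntegrable_rpow' (by norm_num)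
  have := (h.comp_sub_left 1)
  simpa using this.symm

lemma integrable_of_bound {E : Type*} [NormedAddCommGroup E] {g : ℝ → E} {C : ℝ}
    (hm : AEStronglyMeasurable g ((volume : Measure ℝ).restrict (Ι (0:ℝ) 1)))
    (hb : ∀ t ∈ Ioo (0:ℝ) 1, ‖g t‖ ≤ C * (1-t) ^ (-(1/2) : ℝ)) :
    IntervalIntegrable g volume 0 1 := by
  refine (Jint.const_mul C).mono_fun hm ?_
  filter_upwards [ae_mem_Ioo] with t ht
  refine (hb t ht).trans ?_
  have h1 : (0:ℝ) ≤ (1-t) ^ (-(1/2) : ℝ) := Real.rpow_nonneg (by linarith [ht.2]) _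
  calc C * (1-t) ^ (-(1/2) : ℝ) ≤ |C| * (1-t) ^ (-(1/2) : ℝ) :=
        mul_le_mul_of_nonneg_right (le_abs_self C) h1
    _ = ‖C * (1-t) ^ (-(1/2) : ℝ)‖ := by
        rw [norm_mul, Real.norm_eq_abs, Real.norm_eq_abs, abs_of_nonneg h1]

/-! ### Continuity of the integrands -/

section integrands
variable (hp : 1 < p)
include hp

lemma base_continuous (w : ℂ) : Continuous fun t : ℝ => (Af t : ℂ) + w * (Bf p t : ℂ) := by
  have hB : Continuous fun t : ℝ => t ^ (p+1) := by
    rw [continuous_iff_continuousAt]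
    intro t
    exact Real.continuousAt_rpow_const t (p+1) (Or.inr (hq0 hp).le)
  have hA : Continuous Af := by
    unfold Af; fun_prop
  have hBc : Continuous (Bf p) := by
    unfold Bf; exact continuous_const.sub hB
  fun_prop

lemma fC_contOn {w : ℂ} (hw : w ∈ UC p) : ContinuousOn (fC p w) (Ioo (0:ℝ) 1) := by
  intro t ht
  have hm : ((Af t : ℂ) + w * (Bf p t : ℂ)) ∈ Complex.slitPlane :=
    base_mem_slitPlane hp ⟨ht.1.le, ht.2⟩ hw
  exact (ContinuousAt.comp (g := fun z : ℂ => z ^ (-(1/2) : ℂ))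
    (f := fun t : ℝ => (Af t : ℂ) + w * (Bf p t : ℂ))
    (continuousAt_cpow_const hm) (base_continuous hp w).continuousAt).continuousWithinAt

lemma fC'_contOn {w : ℂ} (hw : w ∈ UC p) : ContinuousOn (fC' p w) (Ioo (0:ℝ) 1) := by
  intro t ht
  have hm : ((Af t : ℂ) + w * (Bf p t : ℂ)) ∈ Complex.slitPlane :=
    base_mem_slitPlane hp ⟨ht.1.le, ht.2⟩ hw
  have h1 : ContinuousAt (fun t : ℝ => ((Af t : ℂ) + w * (Bf p t : ℂ)) ^ ((-(1/2) : ℂ) - 1)) t :=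
    ContinuousAt.comp (g := fun z : ℂ => z ^ ((-(1/2) : ℂ) - 1))
      (f := fun t : ℝ => (Af t : ℂ) + w * (Bf p t : ℂ))
      (continuousAt_cpow_const hm) (base_continuous hp w).continuousAt
  have h2 : ContinuousAt (fun t : ℝ => (Bf p t : ℂ)) t := by
    have : Continuous fun t : ℝ => t ^ (p+1) := by
      rw [continuous_iff_continuousAt]
      intro t
      exact Real.continuousAt_rpow_const t (p+1) (Or.inr (hq0 hp).le)
    unfold Bf; fun_prop
  exact ((continuousAt_const.mul h1).mul h2).continuousWithinAt

lemma fr_contOn {w : ℝ} (hw : w ∈ sR p) :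
    ContinuousOn (fun t => (Af t + w * Bf p t) ^ (-(1/2) : ℝ)) (Ioo (0:ℝ) 1) := by
  intro t ht
  have hpos : 0 < Af t + w * Bf p t := base_real_pos hp ⟨ht.1.le, ht.2⟩ hw
  have hc : ContinuousAt (fun t => Af t + w * Bf p t) t := by
    have : Continuous fun t : ℝ => t ^ (p+1) := by
      rw [continuous_iff_continuousAt]
      intro t
      exact Real.continuousAt_rpow_const t (p+1) (Or.inr (hq0 hp).le)
    unfold Af Bf; fun_prop
  exact (ContinuousAt.comp (g := fun x : ℝ => x ^ (-(1/2) : ℝ))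
    (f := fun t : ℝ => Af t + w * Bf p t)
    (Real.continuousAt_rpow_const _ _ (Or.inl hpos.ne')) hc).continuousWithinAt

lemma f1r_contOn {w : ℝ} (hw : w ∈ sR p) :
    ContinuousOn (fun t => (-(1/2)) * (Af t + w * Bf p t) ^ ((-(1/2) : ℝ) - 1) * Bf p t)
      (Ioo (0:ℝ) 1) := by
  intro t ht
  have hpos : 0 < Af t + w * Bf p t := base_real_pos hp ⟨ht.1.le, ht.2⟩ hw
  have hB : Continuous fun t : ℝ => t ^ (p+1) := by
    rw [continuous_iff_continuousAt]
    intro t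
    exact Real.continuousAt_rpow_const t (p+1) (Or.inr (hq0 hp).le)
  have hc : ContinuousAt (fun t => Af t + w * Bf p t) t := by
    unfold Af Bf; fun_prop
  have h1 : ContinuousAt (fun t => (Af t + w * Bf p t) ^ ((-(1/2) : ℝ) - 1)) t :=
    ContinuousAt.comp (g := fun x : ℝ => x ^ ((-(1/2) : ℝ) - 1))
      (f := fun t : ℝ => Af t + w * Bf p t)
      (Real.continuousAt_rpow_const _ _ (Or.inl hpos.ne')) hc
  have h2 : ContinuousAt (Bf p) t := by unfold Bf; fun_prop
  exact ((continuousAt_const.mul h1).mul h2).continuousWithinAt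

/-! ### Norm bounds -/

lemma base_facts {t : ℝ} (ht : t ∈ Ioo (0:ℝ) 1) {σ : ℝ} (hσU : -(2/(p+1)) < σ)
    {w : ℂ} (hσ : σ ≤ w.re) :
    mfun p σ * Af t ≤ ‖(Af t : ℂ) + w * (Bf p t : ℂ)‖ ∧
    ((Af t : ℂ) + w * (Bf p t : ℂ)) ≠ 0 ∧ 0 < mfun p σ * Af t := by
  have hA : 0 < Af t := Af_pos hp ⟨ht.1.le, ht.2⟩
  have hm := mfun_pos hp hσU
  have hre := re_bound hp ⟨ht.1.le, ht.2.le⟩ hσ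
  have habs : mfun p σ * Af t ≤ ‖(Af t : ℂ) + w * (Bf p t : ℂ)‖ :=
    le_trans hre (Complex.re_le_norm _)
  have hpos : 0 < mfun p σ * Af t := mul_pos hm hA
  exact ⟨habs, by
    intro h
    rw [h] at habs
    simp at habs
    nlinarith, hpos⟩

lemma Af_rpow_le {t : ℝ} (ht : t ∈ Ioo (0:ℝ) 1) :
    Af t ^ (-(1/2) : ℝ) ≤ (1-t) ^ (-(1/2) : ℝ) :=
  Real.rpow_le_rpow_of_nonpos (by linarith [ht.2]) (one_sub_le_Af ⟨ht.1.le, ht.2.le⟩)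
    (by norm_num)

lemma norm_fC_le {t : ℝ} (ht : t ∈ Ioo (0:ℝ) 1) {σ : ℝ} (hσU : -(2/(p+1)) < σ)
    {w : ℂ} (hσ : σ ≤ w.re) :
    ‖fC p w t‖ ≤ (mfun p σ) ^ (-(1/2) : ℝ) * (1-t) ^ (-(1/2) : ℝ) := by
  obtain ⟨habs, hxne, hpos⟩ := base_facts hp ht hσU hσ
  have hA : 0 < Af t := Af_pos hp ⟨ht.1.le, ht.2⟩
  have hm := mfun_pos hp hσU
  have h1 : ‖fC p w t‖ = ‖(Af t : ℂ) + w * (Bf p t : ℂ)‖ ^ (-(1/2) : ℝ) := by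
    rw [fC, Complex.norm_cpow_of_ne_zero hxne]
    norm_num
  rw [h1]
  calc ‖(Af t : ℂ) + w * (Bf p t : ℂ)‖ ^ (-(1/2) : ℝ)
      ≤ (mfun p σ * Af t) ^ (-(1/2) : ℝ) :=
        Real.rpow_le_rpow_of_nonpos hpos habs (by norm_num)
    _ = mfun p σ ^ (-(1/2) : ℝ) * Af t ^ (-(1/2) : ℝ) := Real.mul_rpow hm.le hA.le
    _ ≤ mfun p σ ^ (-(1/2) : ℝ) * (1-t) ^ (-(1/2) : ℝ) :=
        mul_le_mul_of_nonneg_left (Af_rpow_le hp ht) (Real.rpow_nonneg hm.le _)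

lemma norm_fC'_le {t : ℝ} (ht : t ∈ Ioo (0:ℝ) 1) {σ : ℝ} (hσU : -(2/(p+1)) < σ)
    {w : ℂ} (hσ : σ ≤ w.re) :
    ‖fC' p w t‖ ≤ ((p+1)/4 * (mfun p σ) ^ (-(3/2) : ℝ)) * (1-t) ^ (-(1/2) : ℝ) := by
  obtain ⟨habs, hxne, hpos⟩ := base_facts hp ht hσU hσ
  have hA : 0 < Af t := Af_pos hp ⟨ht.1.le, ht.2⟩
  have hm := mfun_pos hp hσU
  have hB0 : 0 ≤ Bf p t := Bf_nonneg hp ⟨ht.1.le, ht.2.le⟩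
  have hBle : Bf p t ≤ (p+1)/2 * Af t := Bf_le hp ⟨ht.1.le, ht.2.le⟩
  have h1 : ‖fC' p w t‖
      = 1/2 * (‖(Af t : ℂ) + w * (Bf p t : ℂ)‖ ^ (-(3/2) : ℝ) * Bf p t) := by
    rw [fC']
    rw [norm_mul, norm_mul, Complex.norm_cpow_of_ne_zero hxne]
    have : ‖(Bf p t : ℂ)‖ = Bf p t := by
      rw [Complex.norm_real, Real.norm_of_nonneg hB0]
    rw [this]
    norm_num
    ring
  rw [h1]
  have h2 : ‖(Af t : ℂ) + w * (Bf p t : ℂ)‖ ^ (-(3/2) : ℝ)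
      ≤ mfun p σ ^ (-(3/2) : ℝ) * Af t ^ (-(3/2) : ℝ) := by
    calc ‖(Af t : ℂ) + w * (Bf p t : ℂ)‖ ^ (-(3/2) : ℝ)
        ≤ (mfun p σ * Af t) ^ (-(3/2) : ℝ) :=
          Real.rpow_le_rpow_of_nonpos hpos habs (by norm_num)
      _ = mfun p σ ^ (-(3/2) : ℝ) * Af t ^ (-(3/2) : ℝ) := Real.mul_rpow hm.le hA.le
  have hAA : Af t ^ (-(3/2) : ℝ) * Af t = Af t ^ (-(1/2) : ℝ) := by
    rw [← Real.rpow_add_one hA.ne' (-(3/2))]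
    norm_num
  have h3 : ‖(Af t : ℂ) + w * (Bf p t : ℂ)‖ ^ (-(3/2) : ℝ) * Bf p t
      ≤ mfun p σ ^ (-(3/2) : ℝ) * ((p+1)/2) * Af t ^ (-(1/2) : ℝ) := by
    have hb2 : ‖(Af t : ℂ) + w * (Bf p t : ℂ)‖ ^ (-(3/2) : ℝ) * Bf p t
        ≤ (mfun p σ ^ (-(3/2) : ℝ) * Af t ^ (-(3/2) : ℝ)) * ((p+1)/2 * Af t) := by
      have hnn : (0:ℝ) ≤ ‖(Af t : ℂ) + w * (Bf p t : ℂ)‖ ^ (-(3/2) : ℝ) :=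
        Real.rpow_nonneg (norm_nonneg _) _
      exact mul_le_mul h2 hBle hB0 (by positivity)
    calc ‖(Af t : ℂ) + w * (Bf p t : ℂ)‖ ^ (-(3/2) : ℝ) * Bf p t
        ≤ (mfun p σ ^ (-(3/2) : ℝ) * Af t ^ (-(3/2) : ℝ)) * ((p+1)/2 * Af t) := hb2
      _ = mfun p σ ^ (-(3/2) : ℝ) * ((p+1)/2) * (Af t ^ (-(3/2) : ℝ) * Af t) := by ring
      _ = mfun p σ ^ (-(3/2) : ℝ) * ((p+1)/2) * Af t ^ (-(1/2) : ℝ) := by rw [hAA]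
  have h4 : Af t ^ (-(1/2) : ℝ) ≤ (1-t) ^ (-(1/2) : ℝ) := Af_rpow_le hp ht
  have hmn : (0:ℝ) ≤ mfun p σ ^ (-(3/2) : ℝ) := Real.rpow_nonneg hm.le _
  have hAn : (0:ℝ) ≤ Af t ^ (-(1/2) : ℝ) := Real.rpow_nonneg hA.le _
  nlinarith [mul_le_mul_of_nonneg_left h4 (mul_nonneg hmn (by positivity : (0:ℝ) ≤ (p+1)/2))]

/-! ### Integrability -/

lemma int_fC {w : ℂ} (hw : w ∈ UC p) : IntervalIntegrable (fC p w) volume 0 1 :=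
  integrable_of_bound (aesm_of_contOn (fC_contOn hp hw))
    (fun t ht => norm_fC_le hp ht hw le_rfl)

lemma fC_ofReal {w : ℝ} (hw : w ∈ sR p) {t : ℝ} (ht : t ∈ Icc (0:ℝ) 1) :
    fC p (w : ℂ) t = (((Af t + w * Bf p t) ^ (-(1/2) : ℝ) : ℝ) : ℂ) := by
  have h0 : 0 ≤ Af t + w * Bf p t := base_real_nonneg hp ht hw
  have hofr : ((Af t + w * Bf p t : ℝ) : ℂ) ^ (-(1/2) : ℂ)
      = (((Af t + w * Bf p t) ^ (-(1/2) : ℝ) : ℝ) : ℂ) := by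
    rw [Complex.ofReal_cpow h0]
    norm_num
  rw [fC, show ((Af t : ℂ) + (w:ℂ) * (Bf p t : ℂ)) = ((Af t + w * Bf p t : ℝ) : ℂ) by
    push_cast; ring, hofr]

lemma fC'_ofReal {w : ℝ} (hw : w ∈ sR p) {t : ℝ} (ht : t ∈ Icc (0:ℝ) 1) :
    fC' p (w : ℂ) t
      = ((((-(1/2)) * (Af t + w * Bf p t) ^ ((-(1/2) : ℝ) - 1) * Bf p t) : ℝ) : ℂ) := by
  have h0 : 0 ≤ Af t + w * Bf p t := base_real_nonneg hp ht hw
  have hofr : ((Af t + w * Bf p t : ℝ) : ℂ) ^ ((-(1/2) : ℂ) - 1)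
      = (((Af t + w * Bf p t) ^ ((-(1/2) : ℝ) - 1) : ℝ) : ℂ) := by
    rw [Complex.ofReal_cpow h0]
    norm_num
  rw [fC', show ((Af t : ℂ) + (w:ℂ) * (Bf p t : ℂ)) = ((Af t + w * Bf p t : ℝ) : ℂ) by
    push_cast; ring, hofr]
  push_cast
  ring

lemma norm_fr_eq {w : ℝ} (hw : w ∈ sR p) {t : ℝ} (ht : t ∈ Ioo (0:ℝ) 1) :
    ‖(Af t + w * Bf p t) ^ (-(1/2) : ℝ)‖ = ‖fC p (w : ℂ) t‖ := by
  rw [fC_ofReal hp hw ⟨ht.1.le, ht.2.le⟩, Complex.norm_real]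

lemma int_fr {w : ℝ} (hw : w ∈ sR p) :
    IntervalIntegrable (fun t => (Af t + w * Bf p t) ^ (-(1/2) : ℝ)) volume 0 1 :=
  integrable_of_bound (aesm_of_contOn (fr_contOn hp hw))
    (fun t ht => by
      rw [show ‖(Af t + w * Bf p t) ^ (-(1/2) : ℝ)‖
          = ‖fC p (w : ℂ) t‖ from norm_fr_eq hp hw ht]
      exact norm_fC_le hp ht hw (by simp))

lemma norm_f1r_eq {w : ℝ} (hw : w ∈ sR p) {t : ℝ} (ht : t ∈ Ioo (0:ℝ) 1) :
    ‖(-(1/2)) * (Af t + w * Bf p t) ^ ((-(1/2) : ℝ) - 1) * Bf p t‖ = ‖fC' p (w : ℂ) t‖ := by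
  rw [fC'_ofReal hp hw ⟨ht.1.le, ht.2.le⟩, Complex.norm_real]

lemma int_f1r {w : ℝ} (hw : w ∈ sR p) :
    IntervalIntegrable
      (fun t => (-(1/2)) * (Af t + w * Bf p t) ^ ((-(1/2) : ℝ) - 1) * Bf p t) volume 0 1 :=
  integrable_of_bound (aesm_of_contOn (f1r_contOn hp hw))
    (fun t ht => by
      rw [norm_f1r_eq hp hw ht]
      exact norm_fC'_le hp ht hw (by simp))

/-! ### The master derivative lemma -/

omit hp in
lemma UC_open : IsOpen (UC p) := isOpen_lt continuous_const Complex.continuous_re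

lemma master {w₀ : ℂ} (hw₀ : w₀ ∈ UC p) : HasDerivAt (Phi p) (Phi' p w₀) w₀ := by
  classical
  set ε : ℝ := (w₀.re + 2/(p+1)) / 2 with hε
  have hεpos : 0 < ε := by
    have := hw₀
    simp only [UC, mem_setOf_eq] at this
    simp only [hε]
    linarith
  set σ : ℝ := w₀.re - ε with hσdef
  have hσU : -(2/(p+1)) < σ := by
    have := hw₀
    simp only [UC, mem_setOf_eq] at this
    simp only [hσdef, hε]
    linarith
  have hball : ∀ w ∈ Metric.ball w₀ ε, σ ≤ w.re ∧ w ∈ UC p := by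
    intro w hw
    rw [Metric.mem_ball] at hw
    have h1 : |(w - w₀).re| ≤ ‖w - w₀‖ := Complex.abs_re_le_norm _
    have h2 : ‖w - w₀‖ < ε := by
      rw [← Complex.dist_eq]; exact hw
    have h3 : |w.re - w₀.re| < ε := by
      simpa [Complex.sub_re] using lt_of_le_of_lt h1 h2
    have h4 : σ ≤ w.re := by
      have := abs_lt.mp h3
      simp only [hσdef]; linarith [this.1]
    exact ⟨h4, lt_of_lt_of_le hσU h4⟩
  have key := intervalIntegral.hasDerivAt_integral_of_dominated_loc_of_deriv_le
      (F := fC p) (F' := fC' p) (x₀ := w₀)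
      (bound := fun t => ((p+1)/4 * (mfun p σ) ^ (-(3/2) : ℝ)) * (1-t) ^ (-(1/2) : ℝ))
      (a := 0) (b := 1) (μ := volume) (Metric.ball_mem_nhds w₀ hεpos)
      ?_ (int_fC hp hw₀) (aesm_of_contOn (fC'_contOn hp hw₀)) ?_ ?_ ?_
  · exact key.2
  · filter_upwards [UC_open.eventually_mem hw₀] with w hw
    exact aesm_of_contOn (fC_contOn hp hw)
  · filter_upwards [ae_imp_Ioo] with t ht hti
    intro w hw
    exact norm_fC'_le hp (ht hti) hσU (hball w hw).1
  · exact (Jint.const_mul _)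
  · filter_upwards [ae_imp_Ioo] with t ht hti
    intro w hw
    replace ht := ht hti
    have hslit : ((Af t : ℂ) + w * (Bf p t : ℂ)) ∈ Complex.slitPlane :=
      base_mem_slitPlane hp ⟨ht.1.le, ht.2⟩ (hball w hw).2
    have hbase : HasDerivAt (fun w : ℂ => (Af t : ℂ) + w * (Bf p t : ℂ)) (Bf p t : ℂ) w := by
      simpa using ((hasDerivAt_id w).mul_const ((Bf p t : ℂ))).const_add ((Af t : ℂ))
    have := HasDerivAt.cpow_const (c := (-(1/2) : ℂ)) hbase hslit
    simpa [fC, fC', mul_comm, mul_assoc, mul_left_comm] using this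

end integrands

/-! ### Real-side lemmas -/

section realside
variable (hp : 1 < p)
include hp

lemma sR_zero : (0:ℝ) ∈ sR p := by
  simp only [sR, mem_Ioi]
  have : 0 < 2/(p+1) := by positivity
  linarith

lemma sR_of_pos {w : ℝ} (hw : 0 < w) : w ∈ sR p := by
  simp only [sR, mem_Ioi]
  have : 0 < 2/(p+1) := by positivity
  linarith

lemma memUC {w : ℝ} (hw : w ∈ sR p) : (w:ℂ) ∈ UC p := by
  simpa [UC, sR] using hw

lemma Phi_ofReal {w : ℝ} (hw : w ∈ sR p) : Phi p (w:ℂ) = ((Fr p w : ℝ) : ℂ) := by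
  rw [Phi, Fr, ← intervalIntegral.integral_ofReal]
  refine intervalIntegral.integral_congr ?_
  intro t ht
  rw [uIcc_of_le zero_le_one] at ht
  exact fC_ofReal hp hw ht

lemma Phi'_ofReal {w : ℝ} (hw : w ∈ sR p) : Phi' p (w:ℂ) = ((F1 p w : ℝ) : ℂ) := by
  rw [Phi', F1, ← intervalIntegral.integral_ofReal]
  refine intervalIntegral.integral_congr ?_
  intro t ht
  rw [uIcc_of_le zero_le_one] at ht
  exact fC'_ofReal hp hw ht

omit hp in
lemma sR_open : IsOpen (sR p) := isOpen_Ioi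

lemma Phi_re_eventually {w : ℝ} (hw : w ∈ sR p) :
    (fun x : ℝ => (Phi p (x:ℂ)).re) =ᶠ[𝓝 w] Fr p := by
  filter_upwards [sR_open.eventually_mem hw] with x hx
  rw [Phi_ofReal hp hx, Complex.ofReal_re]

lemma Fr_hasDeriv {w : ℝ} (hw : w ∈ sR p) : HasDerivAt (Fr p) (F1 p w) w := by
  have h2 := (master hp (memUC hp hw)).real_of_complex
  have h3 : HasDerivAt (Fr p) ((Phi' p (w:ℂ)).re) w :=
    h2.congr_of_eventuallyEq (Phi_re_eventually hp hw).symm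
  rwa [Phi'_ofReal hp hw, Complex.ofReal_re] at h3

lemma Fr_contDiffAt {w : ℝ} (hw : w ∈ sR p) : ContDiffAt ℝ (⊤ : ℕ∞) (Fr p) w := by
  have hdiff : DifferentiableOn ℂ (Phi p) (UC p) := fun z hz =>
    (master hp hz).differentiableAt.differentiableWithinAt
  have han : AnalyticOnNhd ℂ (Phi p) (UC p) := hdiff.analyticOnNhd UC_open
  have h1 : ContDiffAt ℂ ⊤ (Phi p) (w:ℂ) := (han _ (memUC hp hw)).contDiffAt
  exact (h1.real_of_complex.congr_of_eventuallyEq (Phi_re_eventually hp hw).symm).of_le le_top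

lemma F1_neg {w : ℝ} (hw : w ∈ sR p) : F1 p w < 0 := by
  have hpos : (0:ℝ) < ∫ t in (0:ℝ)..1,
      -((-(1/2)) * (Af t + w * Bf p t) ^ ((-(1/2) : ℝ) - 1) * Bf p t) := by
    refine intervalIntegral.intervalIntegral_pos_of_pos_on ((int_f1r hp hw).neg) ?_ zero_lt_one
    intro t ht
    have hb : 0 < Af t + w * Bf p t := base_real_pos hp ⟨ht.1.le, ht.2⟩ hw
    have hB : 0 < Bf p t := Bf_pos hp ht
    have := Real.rpow_pos_of_pos hb ((-(1/2) : ℝ) - 1)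
    nlinarith
  rw [intervalIntegral.integral_neg] at hpos
  rw [F1]
  linarith

lemma Fr_pos {w : ℝ} (hw : w ∈ sR p) : 0 < Fr p w := by
  refine intervalIntegral.intervalIntegral_pos_of_pos_on (int_fr hp hw) ?_ zero_lt_one
  intro t ht
  exact Real.rpow_pos_of_pos (base_real_pos hp ⟨ht.1.le, ht.2⟩ hw) _

omit hp in
lemma rpow_neg_half_eq {x : ℝ} (hx : 0 ≤ x) : x ^ (-(1/2) : ℝ) = 1 / Real.sqrt x := by
  rw [Real.rpow_neg hx, Real.sqrt_eq_rpow, one_div]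
  norm_num

lemma Fr_zero_val : Fr p 0 = π/2 := by
  have h1 : Fr p 0 = ∫ t in (0:ℝ)..1, (1 - t^2) ^ (-(1/2) : ℝ) := by
    rw [Fr]
    refine intervalIntegral.integral_congr ?_
    intro t ht
    norm_num [Af]
  have hint : IntervalIntegrable (fun t : ℝ => (1 - t^2) ^ (-(1/2) : ℝ)) volume 0 1 := by
    have := int_fr hp (sR_zero hp)
    have he : (fun t : ℝ => (Af t + 0 * Bf p t) ^ (-(1/2) : ℝ))
        = fun t : ℝ => (1 - t^2) ^ (-(1/2) : ℝ) := by
      funext t; norm_num [Af]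
    rwa [he] at this
  have hderiv : ∀ t ∈ Ioo (0:ℝ) 1,
      HasDerivAt Real.arcsin ((1 - t^2) ^ (-(1/2) : ℝ)) t := by
    intro t ht
    have h := Real.hasDerivAt_arcsin (by linarith [ht.1] : t ≠ -1) (ne_of_lt ht.2)
    have h2 : 0 ≤ 1 - t^2 := by nlinarith [ht.1, ht.2]
    rwa [← rpow_neg_half_eq h2] at h
  have ha : Tendsto Real.arcsin (𝓝[>] (0:ℝ)) (𝓝 0) := by
    have h := (Real.continuous_arcsin.tendsto 0).mono_left
      (nhdsWithin_le_nhds (s := Ioi (0:ℝ)))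
    simpa using h
  have hb : Tendsto Real.arcsin (𝓝[<] (1:ℝ)) (𝓝 (π/2)) := by
    have h := (Real.continuous_arcsin.tendsto 1).mono_left
      (nhdsWithin_le_nhds (s := Iio (1:ℝ)))
    simpa using h
  rw [h1, intervalIntegral.integral_eq_sub_of_hasDerivAt_of_tendsto zero_lt_one hderiv hint ha hb]
  ring

lemma Fr_anti : StrictAntiOn (Fr p) (sR p) := by
  have hconv : Convex ℝ (sR p) := by simp only [sR]; exact convex_Ioi _
  refine strictAntiOn_of_deriv_neg hconv
    (fun w hw => (Fr_hasDeriv hp hw).continuousAt.continuousWithinAt) ?_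
  intro w hw
  have hint : interior (sR p) = sR p := by simp only [sR]; exact interior_Ioi
  rw [hint] at hw
  rw [(Fr_hasDeriv hp hw).deriv]
  exact F1_neg hp hw

lemma Fr_le_bound {w : ℝ} (hw : 0 < w) : Fr p w ≤ π/2 * w ^ (-(1/2) : ℝ) := by
  have hmono : ∫ t in (0:ℝ)..1, (Af t + w * Bf p t) ^ (-(1/2) : ℝ)
      ≤ ∫ t in (0:ℝ)..1, w ^ (-(1/2) : ℝ) * (Af t + 0 * Bf p t) ^ (-(1/2) : ℝ) := by
    refine intervalIntegral.integral_mono_on zero_le_one (int_fr hp (sR_of_pos hp hw))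
      ((int_fr hp (sR_zero hp)).const_mul _) ?_
    intro t ht
    rcases eq_or_lt_of_le ht.2 with h1 | h1
    · have hA1 : Af t = 0 := by simp [Af, h1]
      have hB1 : Bf p t = 0 := by simp [Bf, h1, Real.one_rpow]
      rw [hA1, hB1]
      norm_num
    · have hA : 0 < Af t := Af_pos hp ⟨ht.1, h1⟩
      have hAB : Af t ≤ Bf p t := Af_le_Bf hp ht
      have hwA : 0 < w * Af t := mul_pos hw hA
      have hle : w * Af t ≤ Af t + w * Bf p t := by nlinarith
      have h2 : (Af t + w * Bf p t) ^ (-(1/2) : ℝ) ≤ (w * Af t) ^ (-(1/2) : ℝ) :=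
        Real.rpow_le_rpow_of_nonpos hwA hle (by norm_num)
      have h3 : (w * Af t) ^ (-(1/2) : ℝ) = w ^ (-(1/2) : ℝ) * Af t ^ (-(1/2) : ℝ) :=
        Real.mul_rpow hw.le hA.le
      have h4 : Af t + 0 * Bf p t = Af t := by ring
      rw [h4]
      rw [h3] at h2
      exact h2
  rw [intervalIntegral.integral_const_mul] at hmono
  have hz := Fr_zero_val hp
  have hfr0 : (∫ t in (0:ℝ)..1, (Af t + 0 * Bf p t) ^ (-(1/2) : ℝ)) = π/2 := hz
  rw [hfr0] at hmono
  calc Fr p w ≤ w ^ (-(1/2) : ℝ) * (π/2) := hmono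
    _ = π/2 * w ^ (-(1/2) : ℝ) := by ring

end realside

/-! ### The function `g(x) = x² + (2/(p+1)) x^(p+1)` and its inverse `N` -/

def gfun (p x : ℝ) : ℝ := x ^ 2 + 2/(p+1) * x ^ (p+1)

section Nside
variable (hp : 1 < p)
include hp

lemma g_strictMono : StrictMonoOn (gfun p) (Ioi (0:ℝ)) := by
  intro x hx y hy hxy
  simp only [mem_Ioi] at hx hy
  have h1 : x ^ 2 < y ^ 2 := by nlinarith
  have h2 : x ^ (p+1) < y ^ (p+1) := Real.rpow_lt_rpow hx.le hxy (hq0 hp)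
  have h3 : 0 < 2/(p+1) := by positivity
  simp only [gfun]
  nlinarith

lemma g_hasDeriv {x : ℝ} (hx : 0 < x) :
    HasDerivAt (gfun p) (2*x + 2 * x ^ p) x := by
  have h1 : HasDerivAt (fun x : ℝ => x ^ 2) (2 * x) x := by
    simpa using hasDerivAt_pow 2 x
  have h2 : HasDerivAt (fun x : ℝ => x ^ (p+1)) ((p+1) * x ^ p) x := by
    have := Real.hasDerivAt_rpow_const (x := x) (p := p+1) (Or.inl hx.ne')
    simpa using this
  have h3 := h1.add (h2.const_mul (2/(p+1)))
  have he : 2 * x + 2/(p+1) * ((p+1) * x ^ p) = 2*x + 2 * x ^ p := by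
    have hne : p + 1 ≠ 0 := by linarith
    field_simp
  have h4 : HasDerivAt (gfun p) (2 * x + 2/(p+1) * ((p+1) * x ^ p)) x := h3
  rwa [he] at h4

lemma g_deriv_pos {x : ℝ} (hx : 0 < x) : 0 < 2*x + 2 * x ^ p := by
  have := Real.rpow_pos_of_pos hx p
  nlinarith

lemma g_contDiffAt {x : ℝ} (hx : 0 < x) : ContDiffAt ℝ (⊤ : ℕ∞) (gfun p) x := by
  have h1 : ContDiffAt ℝ (⊤ : ℕ∞) (fun x : ℝ => x ^ 2) x := (contDiff_id.pow 2).contDiffAt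
  have h2 : ContDiffAt ℝ (⊤ : ℕ∞) (fun x : ℝ => x ^ (p+1)) x :=
    Real.contDiffAt_rpow_const_of_ne hx.ne'
  exact h1.add (contDiffAt_const.mul h2)

lemma N_regular {N : ℝ → ℝ}
    (hN : ∀ c : ℝ, 0 < c → 0 < N c ∧ N c ^ 2 + 2/(p+1) * N c ^ (p+1) = c)
    {c : ℝ} (hc : 0 < c) :
    ContDiffAt ℝ (⊤ : ℕ∞) N c ∧ ∃ d : ℝ, 0 < d ∧ HasDerivAt N d c := by
  classical
  have hx0 : 0 < N c := (hN c hc).1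
  have hgN : ∀ y : ℝ, 0 < y → gfun p (N y) = y := fun y hy => (hN y hy).2
  set d : ℝ := 2 * N c + 2 * N c ^ p with hd
  have hdpos : 0 < d := g_deriv_pos hp hx0
  have hgd : HasDerivAt (gfun p) d (N c) := g_hasDeriv hp hx0
  have hgc : ContDiffAt ℝ (⊤ : ℕ∞) (gfun p) (N c) := g_contDiffAt hp hx0
  set f' : ℝ ≃L[ℝ] ℝ := ContinuousLinearEquiv.unitsEquivAut ℝ (Units.mk0 d hdpos.ne') with hf'def
  have hf' : HasFDerivAt (gfun p) (f' : ℝ →L[ℝ] ℝ) (N c) := by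
    have h1 : HasFDerivAt (gfun p) (ContinuousLinearMap.smulRight (1 : ℝ →L[ℝ] ℝ) d) (N c) :=
      hasDerivAt_iff_hasFDerivAt.mp hgd
    have h2 : (f' : ℝ →L[ℝ] ℝ) = ContinuousLinearMap.smulRight (1 : ℝ →L[ℝ] ℝ) d := by
      ext x
      simp [hf'def, ContinuousLinearEquiv.unitsEquivAut, mul_comm]
    rwa [h2]
  have hn : ((⊤ : ℕ∞) : WithTop ℕ∞) ≠ 0 := by simp
  have hloc : ContDiffAt ℝ (⊤ : ℕ∞) (hgc.localInverse hf' hn) (gfun p (N c)) :=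
    hgc.to_localInverse hf' hn
  have hgNc : gfun p (N c) = c := hgN c hc
  rw [hgNc] at hloc
  set inv := hgc.localInverse hf' hn with hinvdef
  have hstrict := hgc.hasStrictFDerivAt' hf' hn
  have hri : ∀ᶠ y in 𝓝 c, gfun p (inv y) = y := by
    have := hstrict.eventually_right_inverse
    rwa [hgNc] at this
  have hinvc : inv c = N c := by
    have := hstrict.localInverse_apply_image
    rwa [hgNc] at this
  have hcont : ContinuousAt inv c := hloc.continuousAt
  have hinvpos : ∀ᶠ y in 𝓝 c, 0 < inv y := by
    have hmem : Ioi (0:ℝ) ∈ 𝓝 (inv c) := by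
      rw [hinvc]; exact isOpen_Ioi.mem_nhds hx0
    exact hcont.eventually_mem hmem
  have hypos : ∀ᶠ y in 𝓝 c, 0 < y := isOpen_Ioi.eventually_mem hc
  have heq : inv =ᶠ[𝓝 c] N := by
    filter_upwards [hri, hinvpos, hypos] with y h1 h2 h3
    have hNy : 0 < N y := (hN y h3).1
    have : gfun p (inv y) = gfun p (N y) := by rw [h1, hgN y h3]
    exact (g_strictMono hp).injOn h2 hNy this
  have hNcd : ContDiffAt ℝ (⊤ : ℕ∞) N c := hloc.congr_of_eventuallyEq heq.symm
  have hNdiff : DifferentiableAt ℝ N c := hNcd.differentiableAt (by simp)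
  have hNd : HasDerivAt N (deriv N c) c := hNdiff.hasDerivAt
  have hchain : HasDerivAt (fun y => gfun p (N y)) (d * deriv N c) c := by
    exact hgd.comp c hNd
  have hid : HasDerivAt (fun y => gfun p (N y)) 1 c := by
    have hidy : HasDerivAt (fun y : ℝ => y) 1 c := hasDerivAt_id c
    refine hidy.congr_of_eventuallyEq ?_
    filter_upwards [hypos] with y hy
    exact hgN y hy
  have huniq : d * deriv N c = 1 := hchain.unique hid
  have hdN : 0 < deriv N c := by
    rcases lt_trichotomy (deriv N c) 0 with h | h | h
    · nlinarith
    · rw [h] at huniq; norm_num at huniq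
    · exact h
  exact ⟨hNcd, deriv N c, hdN, hNd⟩

end Nside

end PeriodLPlus

open PeriodLPlus in
/-- Properties of the period function
`L(c) = 4∫₀¹ dz/√(1 − z² + (2/(p+1))N(c)^{p−1}(1 − z^{p+1}))` where
`N(c) > 0` solves `N(c)² + (2/(p+1))N(c)^{p+1} = c`. -/
theorem period_L_plus (p : ℝ) (hp : 1 < p)
    (N : ℝ → ℝ)
    (hN : ∀ c : ℝ, 0 < c → 0 < N c ∧ N c ^ 2 + 2 / (p + 1) * N c ^ (p + 1) = c)
    (L : ℝ → ℝ)
    (hL : ∀ c : ℝ, 0 < c → L c =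
      4 * ∫ z in (0:ℝ)..1,
        1 / Real.sqrt (1 - z ^ 2 + 2 / (p + 1) * N c ^ (p - 1) * (1 - z ^ (p + 1)))) :
    -- C^∞ on (0,∞)
    ContDiffOn ℝ (⊤ : ℕ∞) L (Set.Ioi 0) ∧
    -- strictly decreasing with L' < 0
    StrictAntiOn L (Set.Ioi 0) ∧
    (∀ c : ℝ, 0 < c → deriv L c < 0) ∧
    -- L(c) → 2π as c → 0+
    Tendsto L (𝓝[>] (0 : ℝ)) (𝓝 (2 * π)) ∧
    -- L(c) → 0 as c → ∞
    Tendsto L atTop (𝓝 0) ∧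
    -- L maps (0,∞) bijectively onto (0,2π)
    Set.BijOn L (Set.Ioi 0) (Set.Ioo 0 (2 * π)) := by
  have ha0 : (0:ℝ) < 2/(p+1) := by positivity
  have hp1 : 0 < p - 1 := by linarith
  set W : ℝ → ℝ := fun c => 2/(p+1) * N c ^ (p-1) with hW
  have hNpos : ∀ c, 0 < c → 0 < N c := fun c hc => (hN c hc).1
  have hWpos : ∀ c, 0 < c → 0 < W c := by
    intro c hc
    have h := Real.rpow_pos_of_pos (hNpos c hc) (p-1)
    simp only [hW]
    positivity
  have hWsR : ∀ c, 0 < c → W c ∈ sR p := fun c hc => sR_of_pos hp (hWpos c hc)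
  have hLc : ∀ c, 0 < c → L c = 4 * Fr p (W c) := by
    intro c hc
    rw [hL c hc, Fr]
    congr 1
    refine intervalIntegral.integral_congr ?_
    intro t ht
    rw [Set.uIcc_of_le zero_le_one] at ht
    have h0 : 0 ≤ Af t + W c * Bf p t := base_real_nonneg hp ht (hWsR c hc)
    simp only [hW, Af, Bf] at h0 ⊢
    exact (rpow_neg_half_eq h0).symm
  have hWreg : ∀ c, 0 < c → ContDiffAt ℝ (⊤ : ℕ∞) W c ∧ ∃ d, 0 < d ∧ HasDerivAt W d c := by
    intro c hc
    obtain ⟨hNsm, d, hd, hNd⟩ := N_regular hp hN hc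
    have hrp : ContDiffAt ℝ (⊤ : ℕ∞) (fun x : ℝ => x ^ (p-1)) (N c) :=
      Real.contDiffAt_rpow_const_of_ne (hNpos c hc).ne'
    constructor
    · have h1 := hrp.comp c hNsm
      simpa [hW] using contDiffAt_const.mul h1
    · have hrd : HasDerivAt (fun x : ℝ => x ^ (p-1)) ((p-1) * N c ^ (p-1-1)) (N c) :=
        Real.hasDerivAt_rpow_const (Or.inl (hNpos c hc).ne')
      have hcomp := HasDerivAt.const_mul (2/(p+1)) (hrd.comp c hNd)
      refine ⟨_, ?_, by simpa [hW] using hcomp⟩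
      have h2 := Real.rpow_pos_of_pos (hNpos c hc) (p-1-1)
      positivity
  have hLev : ∀ c, 0 < c → L =ᶠ[𝓝 c] fun c' => 4 * Fr p (W c') := by
    intro c hc
    filter_upwards [isOpen_Ioi.eventually_mem hc] with x hx
    exact hLc x hx
  have hLder : ∀ c, 0 < c → ∃ d, d < 0 ∧ HasDerivAt L d c := by
    intro c hc
    obtain ⟨-, d, hd, hWd⟩ := hWreg c hc
    have hFd := Fr_hasDeriv hp (hWsR c hc)
    have hcomp := HasDerivAt.const_mul (4:ℝ) (hFd.comp c hWd)
    refine ⟨4 * (F1 p (W c) * d), ?_, ?_⟩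
    · have := F1_neg hp (hWsR c hc); nlinarith
    · exact hcomp.congr_of_eventuallyEq (hLev c hc)
  have hderneg : ∀ c : ℝ, 0 < c → deriv L c < 0 := by
    intro c hc
    obtain ⟨d, hd, hder⟩ := hLder c hc
    rwa [hder.deriv]
  have hcontL : ∀ c ∈ Set.Ioi (0:ℝ), ContinuousAt L c := by
    intro c hc
    obtain ⟨d, -, hder⟩ := hLder c hc
    exact hder.continuousAt
  have hanti : StrictAntiOn L (Set.Ioi 0) := by
    refine strictAntiOn_of_deriv_neg (convex_Ioi 0)
      (fun c hc => (hcontL c hc).continuousWithinAt) ?_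
    intro c hc
    rw [interior_Ioi] at hc
    exact hderneg c hc
  have hsmooth : ContDiffOn ℝ (⊤ : ℕ∞) L (Set.Ioi 0) := by
    intro c hc
    obtain ⟨hWsm, -⟩ := hWreg c hc
    have hFr := Fr_contDiffAt hp (hWsR c hc)
    have h1 := contDiffAt_const (c := (4:ℝ)).mul (hFr.comp c hWsm)
    exact (h1.congr_of_eventuallyEq (hLev c hc)).contDiffWithinAt
  -- limit at 0+
  have hN0 : Tendsto N (𝓝[>] 0) (𝓝 0) := by
    have hb : ∀ᶠ c in 𝓝[>] (0:ℝ), N c ≤ Real.sqrt c := by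
      filter_upwards [self_mem_nhdsWithin] with c hc
      have hc' : (0:ℝ) < c := hc
      have h3 : 0 < N c ^ (p+1) := Real.rpow_pos_of_pos (hNpos c hc') _
      have h2 : N c ^ 2 ≤ c := by nlinarith [(hN c hc').2]
      exact (Real.le_sqrt (hNpos c hc').le hc'.le).mpr h2
    have h0 : ∀ᶠ c in 𝓝[>] (0:ℝ), 0 ≤ N c := by
      filter_upwards [self_mem_nhdsWithin] with c hc
      exact (hNpos c hc).le
    have hsq : Tendsto Real.sqrt (𝓝[>] (0:ℝ)) (𝓝 0) := by
      have h := (Real.continuous_sqrt.tendsto 0).mono_left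
        (nhdsWithin_le_nhds (s := Set.Ioi (0:ℝ)))
      simpa using h
    exact squeeze_zero' h0 hb hsq
  have hW0 : Tendsto W (𝓝[>] 0) (𝓝 0) := by
    have hNin : Tendsto N (𝓝[>] 0) (𝓝[>] 0) := by
      rw [tendsto_nhdsWithin_iff]
      refine ⟨hN0, ?_⟩
      filter_upwards [self_mem_nhdsWithin] with c hc
      exact hNpos c hc
    have hrp : Tendsto (fun x : ℝ => x ^ (p-1)) (𝓝[>] (0:ℝ)) (𝓝 0) := by
      have hcont := (Real.continuousAt_rpow_const 0 (p-1) (Or.inr hp1.le)).tendsto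
      have h := hcont.mono_left (nhdsWithin_le_nhds (s := Set.Ioi (0:ℝ)))
      rwa [Real.zero_rpow hp1.ne'] at h
    have h := (hrp.comp hNin).const_mul (2/(p+1))
    simpa [hW] using h
  have hlim0 : Tendsto L (𝓝[>] (0:ℝ)) (𝓝 (2*π)) := by
    have hFr0 : ContinuousAt (Fr p) 0 := (Fr_hasDeriv hp (sR_zero hp)).continuousAt
    have h1 : Tendsto (fun c => 4 * Fr p (W c)) (𝓝[>] (0:ℝ)) (𝓝 (4 * Fr p 0)) :=
      (hFr0.tendsto.comp hW0).const_mul 4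
    rw [Fr_zero_val hp, show (4:ℝ) * (π/2) = 2*π by ring] at h1
    refine h1.congr' ?_
    filter_upwards [self_mem_nhdsWithin] with c hc
    exact (hLc c hc).symm
  -- limit at ∞
  have hNtop : Tendsto N atTop atTop := by
    rw [tendsto_atTop]
    intro M
    have hM' : 0 < max M 1 := lt_of_lt_of_le one_pos (le_max_right _ _)
    filter_upwards [eventually_gt_atTop (max (gfun p (max M 1)) 0)] with c hc
    have hcpos : 0 < c := lt_of_le_of_lt (le_max_right _ _) hc
    have hgc : gfun p (max M 1) < c := lt_of_le_of_lt (le_max_left _ _) hc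
    by_contra h
    push_neg at h
    have hNM : N c ≤ max M 1 := le_trans h.le (le_max_left _ _)
    have hmono : gfun p (N c) ≤ gfun p (max M 1) := by
      rcases eq_or_lt_of_le hNM with he | hlt
      · rw [he]
      · exact ((g_strictMono hp) (hNpos c hcpos) hM' hlt).le
    have hgNc : gfun p (N c) = c := (hN c hcpos).2
    rw [hgNc] at hmono
    exact absurd hmono (not_le.mpr hgc)
  have hWtop : Tendsto W atTop atTop := by
    have hrp : Tendsto (fun x : ℝ => x ^ (p-1)) atTop atTop := tendsto_rpow_atTop hp1
    have h := (hrp.comp hNtop).const_mul_atTop ha0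
    simpa [hW] using h
  have hlimtop : Tendsto L atTop (𝓝 0) := by
    have hup : ∀ᶠ c in atTop, L c ≤ 2*π * (W c) ^ (-(1/2):ℝ) := by
      filter_upwards [eventually_gt_atTop (0:ℝ)] with c hc
      rw [hLc c hc]
      have h := Fr_le_bound hp (hWpos c hc)
      nlinarith [pi_pos, Real.rpow_nonneg (hWpos c hc).le (-(1/2):ℝ)]
    have hlo : ∀ᶠ c in atTop, 0 ≤ L c := by
      filter_upwards [eventually_gt_atTop (0:ℝ)] with c hc
      rw [hLc c hc]
      have := Fr_pos hp (hWsR c hc)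
      linarith
    have hz : Tendsto (fun c => 2*π * (W c) ^ (-(1/2):ℝ)) atTop (𝓝 0) := by
      have h1 : Tendsto (fun x : ℝ => x ^ (-(1/2):ℝ)) atTop (𝓝 0) := by
        have := tendsto_rpow_neg_atTop (y := (1/2:ℝ)) (by norm_num)
        simpa using this
      have h2 := (h1.comp hWtop).const_mul (2*π)
      simpa using h2
    exact squeeze_zero' hlo hup hz
  -- bijectivity
  have hmaps : Set.MapsTo L (Set.Ioi 0) (Set.Ioo 0 (2*π)) := by
    intro c hc
    have hc' : (0:ℝ) < c := hc
    have h1 : 0 < Fr p (W c) := Fr_pos hp (hWsR c hc')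
    have h2 : Fr p (W c) < Fr p 0 := Fr_anti hp (sR_zero hp) (hWsR c hc') (hWpos c hc')
    rw [Fr_zero_val hp] at h2
    rw [Set.mem_Ioo, hLc c hc']
    exact ⟨by linarith, by linarith⟩
  refine ⟨hsmooth, hanti, hderneg, hlim0, hlimtop, hmaps, hanti.injOn, ?_⟩
  intro y hy
  obtain ⟨hy1, hy2⟩ := hy
  have h1 : ∀ᶠ c in 𝓝[>] (0:ℝ), y < L c := hlim0.eventually (eventually_gt_nhds hy2)
  obtain ⟨c₁, hyc₁, hc₁⟩ := (h1.and self_mem_nhdsWithin).exists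
  have hc₁' : (0:ℝ) < c₁ := hc₁
  have h2 : ∀ᶠ c in atTop, L c < y := hlimtop.eventually (eventually_lt_nhds hy1)
  obtain ⟨c₂, hc₂L, hc₂gt⟩ := (h2.and (eventually_gt_atTop c₁)).exists
  have hcont2 : ContinuousOn L (Set.Icc c₁ c₂) := fun x hx =>
    (hcontL x (lt_of_lt_of_le hc₁' hx.1)).continuousWithinAt
  have hymem : y ∈ Set.Icc (L c₂) (L c₁) := ⟨hc₂L.le, hyc₁.le⟩
  obtain ⟨x, hx, hxy⟩ := intermediate_value_Icc' hc₂gt.le hcont2 hymem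
  exact ⟨x, lt_of_lt_of_le hc₁' hx.1, hxy⟩
end
end

section
/- Let p > 1 and define F : [0, 2/(p+1)) → ℝ by F(w) = 4∫₀¹ dz/(√(1−z²)·√(1 − w·κ(z))), where κ(z) = (1 − z^{p+1})/(1 − z²) for z ∈ [0,1) (extended continuously by κ(1) = (p+1)/2). Then F is well defined and C^∞ on [0, 2/(p+1)), F(0) = 2π, F(w) → ∞ as w → (2/(p+1))−, F is strictly increasing with F'(w) = 2∫₀¹ κ(z)/(√(1−z²)(1 − w·κ(z))^{3/2}) dz > 0, and strictly convex with F''(w) = 3∫₀¹ κ(z)²/(√(1−z²)(1 − w·κ(z))^{5/2}) dz > 0 for all w ∈ [0, 2/(p+1)). -/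
noncomputable section
open Real Filter Topology

namespace FFaux

open MeasureTheory Set intervalIntegral Metric

/-! ### Generic helpers -/

lemma nonneg_of_deriv (f f' : ℝ → ℝ) (hd : ∀ x : ℝ, HasDerivAt f (f' x) x)
    (h' : ∀ x ∈ Ioo (0:ℝ) 1, f' x ≤ 0) (h1 : f 1 = 0) :
    ∀ t ∈ Icc (0:ℝ) 1, 0 ≤ f t := by
  have hmono : AntitoneOn f (Icc (0:ℝ) 1) := by
    apply antitoneOn_of_deriv_nonpos (convex_Icc 0 1)
    · exact fun x _ => (hd x).continuousAt.continuousWithinAt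
    · intro x hx
      exact (hd x).differentiableAt.differentiableWithinAt
    · intro x hx
      rw [interior_Icc] at hx
      rw [(hd x).deriv]
      exact h' x hx
  intro t ht
  have := hmono ht (right_mem_Icc.2 zero_le_one) ht.2
  simpa [h1] using this

lemma bern {a : ℝ} (ha : 1 ≤ a) : ∀ t ∈ Icc (0:ℝ) 1, 1 - t ^ a ≤ a * (1 - t) := by
  have h0 : (0:ℝ) < a := lt_of_lt_of_le one_pos ha
  have key := nonneg_of_deriv (fun t => a * (1 - t) - (1 - t ^ a))
      (fun t => -a + a * t ^ (a - 1)) ?_ ?_ ?_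
  · intro t ht
    have := key t ht
    linarith
  · intro x
    have h1 : HasDerivAt (fun t : ℝ => t ^ a) (a * x ^ (a - 1)) x := by
      simpa using Real.hasDerivAt_rpow_const (p := a) (Or.inr ha)
    have h2 : HasDerivAt (fun t : ℝ => a * (1 - t) - (1 - t ^ a))
        (a * (-1) - -(a * x ^ (a - 1))) x :=
      (((hasDerivAt_id x).const_sub 1).const_mul a).sub (h1.const_sub 1)
    convert h2 using 1
    ring
  · intro x hx
    have h3 : x ^ (a - 1) ≤ 1 := Real.rpow_le_one hx.1.le hx.2.le (by linarith)
    show -a + a * x ^ (a - 1) ≤ 0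
    nlinarith
  · simp [Real.one_rpow]

lemma onesub_le {a : ℝ} (ha : 0 < a) :
    ∀ t ∈ Icc (0:ℝ) 1, 1 - t ^ a ≤ max 1 a * (1 - t) := by
  intro t ht
  rcases le_total a 1 with h | h
  · have h1 : t ≤ t ^ a := by
      rcases eq_or_lt_of_le ht.1 with h0 | h0
      · simp [← h0, Real.zero_rpow ha.ne']
      · simpa using Real.rpow_le_rpow_of_exponent_ge h0 ht.2 h
    have h2 : (1:ℝ) ≤ max 1 a := le_max_left _ _
    nlinarith [ht.2]
  · have := bern h t ht
    have h2 : a ≤ max 1 a := le_max_right _ _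
    nlinarith [ht.2]

/-! ### Properties of κ -/

section Kappa

variable {p : ℝ} {κ : ℝ → ℝ}

lemma kappa_upper_aux (hp : 1 < p) : ∀ z ∈ Icc (0:ℝ) 1, 0 ≤ (p+1) * (1 - z^2) - 2 * (1 - z ^ (p+1)) := by
  apply nonneg_of_deriv _ (fun z => (p+1) * (-(2*z)) - 2 * (-((p+1) * z ^ p)))
  · intro x
    have h1 : HasDerivAt (fun t : ℝ => t ^ (p+1)) ((p+1) * x ^ p) x := by
      have := Real.hasDerivAt_rpow_const (x := x) (p := p+1) (Or.inr (by linarith))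
      rwa [show p + 1 - 1 = p by ring] at this
    have h2 : HasDerivAt (fun t : ℝ => t ^ (2:ℕ)) (2 * x) x := by
      simpa using hasDerivAt_pow 2 x
    exact ((h2.const_sub 1).const_mul (p+1)).sub ((h1.const_sub 1).const_mul 2)
  · intro x hx
    have h3 : x ^ p ≤ x := by
      have := Real.rpow_le_rpow_of_exponent_ge hx.1 hx.2.le hp.le
      rwa [Real.rpow_one] at this
    show (p+1) * (-(2*x)) - 2 * (-((p+1) * x ^ p)) ≤ 0
    nlinarith
  · simp [Real.one_rpow]

lemma kappa_mem (hp : 1 < p)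
    (hκ : ∀ z : ℝ, 0 ≤ z → z < 1 → κ z = (1 - z ^ (p + 1)) / (1 - z ^ 2))
    (hκ1 : κ 1 = (p + 1) / 2) : ∀ z ∈ Icc (0:ℝ) 1, κ z ∈ Icc 1 ((p + 1) / 2) := by
  intro z hz
  rcases eq_or_lt_of_le hz.2 with h1 | h1
  · rw [h1, hκ1]
    constructor
    · linarith
    · exact le_refl ((p+1)/2)
  · rw [hκ z hz.1 h1]
    have hd : (0:ℝ) < 1 - z^2 := by nlinarith [hz.1]
    constructor
    · rw [le_div_iff₀ hd, one_mul]
      have : z ^ (p+1) ≤ z ^ 2 := by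
        rcases eq_or_lt_of_le hz.1 with h0 | h0
        · rw [← h0]
          rw [Real.zero_rpow (by linarith)]
          positivity
        · have := Real.rpow_le_rpow_of_exponent_ge h0 h1.le
            (show (2:ℝ) ≤ p + 1 by linarith)
          rwa [show ((2:ℝ):ℝ) = ((2:ℕ):ℝ) by norm_num, Real.rpow_natCast] at this
      linarith
    · rw [div_le_div_iff₀ hd (by norm_num : (0:ℝ) < 2)]
      have := kappa_upper_aux hp z ⟨hz.1, h1.le⟩
      nlinarith

lemma slope_ratio (hp : 1 < p) : Tendsto (fun z => (1 - z ^ (p+1)) / (1 - z ^ 2))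
    (𝓝[Ico (0:ℝ) 1] 1) (𝓝 ((p+1)/2)) := by
  have hg : HasDerivAt (fun z : ℝ => z ^ (p+1)) (p+1) 1 := by
    have := Real.hasDerivAt_rpow_const (x := (1:ℝ)) (p := p+1) (Or.inr (by linarith))
    simpa using this
  have hs : HasDerivAt (fun z : ℝ => z ^ (2:ℕ)) 2 1 := by
    simpa using hasDerivAt_pow 2 (1:ℝ)
  have t1 := hasDerivAt_iff_tendsto_slope.1 hg
  have t2 := hasDerivAt_iff_tendsto_slope.1 hs
  have hr : Tendsto (fun z => slope (fun z : ℝ => z ^ (p+1)) 1 z /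
      slope (fun z : ℝ => z ^ (2:ℕ)) 1 z) (𝓝[≠] (1:ℝ)) (𝓝 ((p+1)/2)) :=
    t1.div t2 two_ne_zero
  have hmono : 𝓝[Ico (0:ℝ) 1] (1:ℝ) ≤ 𝓝[≠] (1:ℝ) :=
    nhdsWithin_mono _ (fun y hy => ne_of_lt hy.2)
  refine Tendsto.congr' ?_ (hr.mono_left hmono)
  filter_upwards [self_mem_nhdsWithin] with z hz
  have hz1 : z - 1 ≠ 0 := sub_ne_zero.2 (ne_of_lt hz.2)
  have hz2 : (1:ℝ) - z^2 ≠ 0 := by nlinarith [hz.1, hz.2]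
  rw [slope_def_field, slope_def_field]
  rw [Real.one_rpow]
  rw [one_pow]
  have hz3 : z ^ 2 - 1 ≠ 0 := fun h => hz2 (by linarith)
  field_simp
  ring

lemma kappa_cont (hp : 1 < p)
    (hκ : ∀ z : ℝ, 0 ≤ z → z < 1 → κ z = (1 - z ^ (p + 1)) / (1 - z ^ 2))
    (hκ1 : κ 1 = (p + 1) / 2) : ContinuousOn κ (Icc (0:ℝ) 1) := by
  intro x hx
  rcases eq_or_lt_of_le hx.2 with h1 | h1
  · -- x = 1
    subst h1
    unfold ContinuousWithinAt
    have hIcc : Icc (0:ℝ) 1 ⊆ Ico 0 1 ∪ {1} := by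
      intro y hy
      rcases eq_or_lt_of_le hy.2 with h | h
      · exact Or.inr (by simp [h])
      · exact Or.inl ⟨hy.1, h⟩
    have hle : 𝓝[Icc (0:ℝ) 1] 1 ≤ 𝓝[Ico (0:ℝ) 1] 1 ⊔ 𝓝[{(1:ℝ)}] 1 := by
      rw [← nhdsWithin_union]
      exact nhdsWithin_mono _ hIcc
    apply Tendsto.mono_left _ hle
    rw [tendsto_sup]
    constructor
    · have := slope_ratio hp
      rw [hκ1]
      refine Tendsto.congr' ?_ this
      filter_upwards [self_mem_nhdsWithin] with z hz
      exact (hκ z hz.1 hz.2).symm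
    · rw [nhdsWithin_singleton]
      exact tendsto_pure_nhds κ 1
  · -- x < 1
    have hmem : Ico (0:ℝ) 1 ∈ 𝓝[Icc (0:ℝ) 1] x :=
      mem_nhdsWithin.mpr ⟨Iio 1, isOpen_Iio, h1, fun y hy => ⟨hy.2.1, hy.1⟩⟩
    have hd : (1:ℝ) - x^2 ≠ 0 := by nlinarith [hx.1]
    have hr : ContinuousAt (fun z : ℝ => (1 - z ^ (p+1)) / (1 - z ^ 2)) x := by
      apply ContinuousAt.div
      · exact continuousAt_const.sub
          (Real.continuousAt_rpow_const x (p+1) (Or.inr (by linarith)))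
      · exact continuousAt_const.sub (continuousAt_pow x 2)
      · exact hd
    refine hr.continuousWithinAt.congr_of_eventuallyEq ?_ (hκ x hx.1 h1)
    exact Filter.eventuallyEq_of_mem hmem (fun y hy => hκ y hy.1 hy.2)

end Kappa


section Main

variable {p : ℝ} {κ : ℝ → ℝ}

/-! ### The integrands and integrals -/

def IG (κ : ℝ → ℝ) (n : ℕ) (w z : ℝ) : ℝ :=
  κ z ^ n * (Real.sqrt (1 - z ^ 2))⁻¹ * (1 - w * κ z) ^ (-((n : ℝ) + 1/2))

def IGc (κ : ℝ → ℝ) (n : ℕ) (w : ℂ) (z : ℝ) : ℂ :=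
  (↑(κ z ^ n * (Real.sqrt (1 - z ^ 2))⁻¹) : ℂ) *
    (1 - w * (κ z : ℂ)) ^ ((↑(-((n : ℝ) + 1/2)) : ℂ))

def G (κ : ℝ → ℝ) (n : ℕ) (w : ℝ) : ℝ := ∫ z in (0:ℝ)..1, IG κ n w z

def Gc (κ : ℝ → ℝ) (n : ℕ) (w : ℂ) : ℂ := ∫ z in (0:ℝ)..1, IGc κ n w z

/-! ### Basic bounds -/

lemma c_pos (hp : 1 < p) : 0 < 2 / (p + 1) := by
  apply div_pos two_pos; linarith

lemma c_lt_one (hp : 1 < p) : 2 / (p + 1) < 1 := by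
  rw [div_lt_one (by linarith)]; linarith

lemma D_pos (hp : 1 < p) {b : ℝ} (hb : b < 2 / (p + 1)) :
    0 < min 1 (1 - b * ((p + 1) / 2)) := by
  apply lt_min one_pos
  have h1 : b * ((p + 1) / 2) < (2 / (p + 1)) * ((p + 1) / 2) :=
    mul_lt_mul_of_pos_right hb (by positivity)
  have h2 : (2 / (p + 1)) * ((p + 1) / 2) = 1 := by
    field_simp
  linarith

lemma base_lb (hp : 1 < p) (hm : ∀ z ∈ Icc (0:ℝ) 1, κ z ∈ Icc 1 ((p + 1) / 2))
    {b x z : ℝ} (hb : b < 2 / (p + 1)) (hx : x ≤ b) (hz : z ∈ Icc (0:ℝ) 1) :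
    min 1 (1 - b * ((p + 1) / 2)) ≤ 1 - x * κ z := by
  obtain ⟨hk1, hk2⟩ := hm z hz
  rcases le_or_gt x 0 with h | h
  · have h0 : x * κ z ≤ 0 := mul_nonpos_of_nonpos_of_nonneg h (by linarith)
    calc min 1 (1 - b * ((p + 1) / 2)) ≤ 1 := min_le_left _ _
      _ ≤ 1 - x * κ z := by linarith
  · have hb0 : 0 ≤ b := le_trans h.le hx
    have h0 : x * κ z ≤ b * ((p + 1) / 2) := mul_le_mul hx hk2 (by linarith) hb0
    calc min 1 (1 - b * ((p + 1) / 2)) ≤ 1 - b * ((p + 1) / 2) := min_le_right _ _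
      _ ≤ 1 - x * κ z := by linarith

lemma base_pos (hp : 1 < p) (hm : ∀ z ∈ Icc (0:ℝ) 1, κ z ∈ Icc 1 ((p + 1) / 2))
    {x z : ℝ} (hx : x < 2 / (p + 1)) (hz : z ∈ Icc (0:ℝ) 1) :
    0 < 1 - x * κ z :=
  lt_of_lt_of_le (D_pos hp hx) (base_lb hp hm hx le_rfl hz)

lemma base_re (w : ℂ) (z : ℝ) (κ : ℝ → ℝ) :
    ((1:ℂ) - w * (κ z : ℂ)).re = 1 - w.re * κ z := by
  simp

lemma base_re_lb (hp : 1 < p) (hm : ∀ z ∈ Icc (0:ℝ) 1, κ z ∈ Icc 1 ((p + 1) / 2))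
    {b : ℝ} {w : ℂ} {z : ℝ} (hb : b < 2 / (p + 1)) (hw : w.re ≤ b) (hz : z ∈ Icc (0:ℝ) 1) :
    min 1 (1 - b * ((p + 1) / 2)) ≤ ((1:ℂ) - w * (κ z : ℂ)).re := by
  rw [base_re]
  exact base_lb hp hm hb hw hz

lemma base_slit (hp : 1 < p) (hm : ∀ z ∈ Icc (0:ℝ) 1, κ z ∈ Icc 1 ((p + 1) / 2))
    {w : ℂ} {z : ℝ} (hw : w.re < 2 / (p + 1)) (hz : z ∈ Icc (0:ℝ) 1) :
    ((1:ℂ) - w * (κ z : ℂ)) ∈ Complex.slitPlane := by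
  apply Complex.mem_slitPlane_iff.2
  left
  exact lt_of_lt_of_le (D_pos hp hw) (base_re_lb hp hm hw le_rfl hz)

lemma base_abs_lb (hp : 1 < p) (hm : ∀ z ∈ Icc (0:ℝ) 1, κ z ∈ Icc 1 ((p + 1) / 2))
    {b : ℝ} {w : ℂ} {z : ℝ} (hb : b < 2 / (p + 1)) (hw : w.re ≤ b) (hz : z ∈ Icc (0:ℝ) 1) :
    min 1 (1 - b * ((p + 1) / 2)) ≤ ‖(1:ℂ) - w * (κ z : ℂ)‖ :=
  le_trans (base_re_lb hp hm hb hw hz) (Complex.re_le_norm _)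

lemma norm_IGc_le (hp : 1 < p) (hm : ∀ z ∈ Icc (0:ℝ) 1, κ z ∈ Icc 1 ((p + 1) / 2))
    (n : ℕ) {b : ℝ} {w : ℂ} (hb : b < 2 / (p + 1)) (hw : w.re ≤ b)
    {z : ℝ} (hz : z ∈ Icc (0:ℝ) 1) :
    ‖IGc κ n w z‖ ≤ ((p + 1) / 2) ^ n *
      (min 1 (1 - b * ((p + 1) / 2))) ^ (-((n : ℝ) + 1/2)) * (Real.sqrt (1 - z ^ 2))⁻¹ := by
  obtain ⟨hk1, hk2⟩ := hm z hz
  have hk0 : (0:ℝ) ≤ κ z := by linarith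
  have hD := D_pos hp hb
  rw [IGc, norm_mul, Complex.norm_real, Real.norm_eq_abs, Complex.norm_cpow_real]
  have h1 : ‖(1:ℂ) - w * (κ z : ℂ)‖ ^ (-((n : ℝ) + 1/2)) ≤
      (min 1 (1 - b * ((p + 1) / 2))) ^ (-((n : ℝ) + 1/2)) :=
    Real.rpow_le_rpow_of_nonpos hD (base_abs_lb hp hm hb hw hz)
      (by rw [neg_nonpos]; positivity)
  have h2 : κ z ^ n ≤ ((p + 1) / 2) ^ n := pow_le_pow_left₀ hk0 hk2 n
  have h3 : (0:ℝ) ≤ (Real.sqrt (1 - z ^ 2))⁻¹ := by positivity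
  have h4 : |κ z ^ n * (Real.sqrt (1 - z ^ 2))⁻¹| = κ z ^ n * (Real.sqrt (1 - z ^ 2))⁻¹ :=
    abs_of_nonneg (by positivity)
  rw [h4]
  calc κ z ^ n * (Real.sqrt (1 - z ^ 2))⁻¹ * ‖(1:ℂ) - w * (κ z:ℂ)‖ ^ (-((n : ℝ) + 1/2))
      ≤ ((p + 1) / 2) ^ n * (Real.sqrt (1 - z ^ 2))⁻¹ *
        (min 1 (1 - b * ((p + 1) / 2))) ^ (-((n : ℝ) + 1/2)) := by
        apply mul_le_mul (mul_le_mul_of_nonneg_right h2 h3) h1 (by positivity) (by positivity)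
    _ = ((p + 1) / 2) ^ n * (min 1 (1 - b * ((p + 1) / 2))) ^ (-((n : ℝ) + 1/2)) *
        (Real.sqrt (1 - z ^ 2))⁻¹ := by ring

/-! ### Integrability -/

lemma sqrt_int : IntervalIntegrable (fun z : ℝ => (Real.sqrt (1 - z ^ 2))⁻¹) volume 0 1 := by
  have h0 : IntervalIntegrable (fun x : ℝ => x ^ (-(1/2 : ℝ))) volume 0 1 :=
    intervalIntegral.intervalIntegrable_rpow' (by norm_num)
  have hb : IntervalIntegrable (fun x : ℝ => (1 - x) ^ (-(1/2 : ℝ))) volume 0 1 := by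
    have := (h0.comp_sub_left 1).symm
    simpa using this
  apply hb.mono_fun
  · exact ((Real.continuous_sqrt.comp (continuous_const.sub (continuous_pow 2))).measurable.inv).aestronglyMeasurable
  · rw [Filter.EventuallyLE, ae_restrict_iff' measurableSet_uIoc]
    apply Filter.Eventually.of_forall
    intro x hx
    rw [Set.uIoc_of_le (zero_le_one (α := ℝ))] at hx
    have hx1 : 0 ≤ 1 - x := by linarith [hx.2]
    rw [Real.norm_eq_abs, Real.norm_eq_abs, abs_of_nonneg (by positivity),
      abs_of_nonneg (Real.rpow_nonneg hx1 _)]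
    rcases eq_or_lt_of_le hx.2 with h1 | h1
    · rw [h1]
      have : (1:ℝ) - 1 ^ 2 = 0 := by norm_num
      rw [this, Real.sqrt_zero, inv_zero]
      exact Real.rpow_nonneg (by norm_num) _
    · have hposx : 0 < 1 - x := by linarith
      have hxx : 0 < 1 - x ^ 2 := by nlinarith [hx.1]
      rw [Real.rpow_neg hx1, ← Real.sqrt_eq_rpow]
      apply inv_anti₀ (Real.sqrt_pos.2 hposx)
      apply Real.sqrt_le_sqrt
      nlinarith [hx.1]

lemma sqrt_integral : ∫ z in (0:ℝ)..1, (Real.sqrt (1 - z ^ 2))⁻¹ = π / 2 := by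
  have hint : IntervalIntegrable (fun x : ℝ => 1 / Real.sqrt (1 - x ^ 2)) volume 0 1 := by
    simpa [one_div] using sqrt_int
  have h := intervalIntegral.integral_eq_sub_of_hasDeriv_right_of_le
    (f := Real.arcsin) (f' := fun x => 1 / Real.sqrt (1 - x ^ 2)) zero_le_one
    (Real.continuous_arcsin.continuousOn)
    (fun x hx => (Real.hasDerivAt_arcsin (by linarith [hx.1]) (ne_of_lt hx.2)).hasDerivWithinAt)
    hint
  rw [Real.arcsin_one, Real.arcsin_zero, sub_zero] at h
  rw [← h]
  simp [one_div]

lemma aesm_Ioc {E : Type*} [TopologicalSpace E] [TopologicalSpace.PseudoMetrizableSpace E]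
    {f : ℝ → E} (h : ContinuousOn f (Ico (0:ℝ) 1)) :
    AEStronglyMeasurable f (volume.restrict (Set.uIoc (0:ℝ) 1)) := by
  have h1 : volume.restrict (Set.uIoc (0:ℝ) 1) = volume.restrict (Ico (0:ℝ) 1) := by
    rw [Set.uIoc_of_le (zero_le_one (α := ℝ))]
    exact Measure.restrict_congr_set (Ioc_ae_eq_Icc.trans Ico_ae_eq_Icc.symm)
  rw [h1]
  exact h.aestronglyMeasurable measurableSet_Ico

lemma sqrt_cont : ContinuousOn (fun z : ℝ => (Real.sqrt (1 - z ^ 2))⁻¹) (Ico (0:ℝ) 1) := by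
  apply ContinuousOn.inv₀
  · exact (Real.continuous_sqrt.comp (continuous_const.sub (continuous_pow 2))).continuousOn
  · intro z hz
    have : 0 < 1 - z ^ 2 := by nlinarith [hz.1, hz.2]
    exact ne_of_gt (Real.sqrt_pos.2 this)

lemma contIGc (hp : 1 < p) (hm : ∀ z ∈ Icc (0:ℝ) 1, κ z ∈ Icc 1 ((p + 1) / 2))
    (hcont : ContinuousOn κ (Icc (0:ℝ) 1)) (n : ℕ) {w : ℂ} (hw : w.re < 2 / (p + 1)) :
    ContinuousOn (IGc κ n w) (Ico (0:ℝ) 1) := by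
  have hκc : ContinuousOn κ (Ico (0:ℝ) 1) := hcont.mono Ico_subset_Icc_self
  apply ContinuousOn.mul
  · exact Complex.continuous_ofReal.comp_continuousOn ((hκc.pow n).mul sqrt_cont)
  · apply ContinuousOn.cpow
    · exact continuousOn_const.sub (continuousOn_const.mul
        (Complex.continuous_ofReal.comp_continuousOn hκc))
    · exact continuousOn_const
    · intro z hz
      exact base_slit hp hm hw (Ico_subset_Icc_self hz)

lemma intIGc (hp : 1 < p) (hm : ∀ z ∈ Icc (0:ℝ) 1, κ z ∈ Icc 1 ((p + 1) / 2))
    (hcont : ContinuousOn κ (Icc (0:ℝ) 1)) (n : ℕ) {w : ℂ} (hw : w.re < 2 / (p + 1)) :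
    IntervalIntegrable (IGc κ n w) volume 0 1 := by
  apply (sqrt_int.const_mul (((p + 1) / 2) ^ n *
      (min 1 (1 - w.re * ((p + 1) / 2))) ^ (-((n : ℝ) + 1/2)))).mono_fun
    (aesm_Ioc (contIGc hp hm hcont n hw))
  rw [Filter.EventuallyLE, ae_restrict_iff' measurableSet_uIoc]
  apply Filter.Eventually.of_forall
  intro z hz
  rw [Set.uIoc_of_le (zero_le_one (α := ℝ))] at hz
  have hz' : z ∈ Icc (0:ℝ) 1 := Ioc_subset_Icc_self hz
  have := norm_IGc_le hp hm n hw le_rfl hz'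
  have hD := D_pos hp hw
  rw [Real.norm_eq_abs, abs_of_nonneg (mul_nonneg (mul_nonneg (by positivity)
    (Real.rpow_nonneg hD.le _)) (by positivity))]
  calc ‖IGc κ n w z‖ ≤ _ := this
    _ = _ := by ring

lemma contIG (hp : 1 < p) (hm : ∀ z ∈ Icc (0:ℝ) 1, κ z ∈ Icc 1 ((p + 1) / 2))
    (hcont : ContinuousOn κ (Icc (0:ℝ) 1)) (n : ℕ) {w : ℝ} (hw : w < 2 / (p + 1)) :
    ContinuousOn (IG κ n w) (Ico (0:ℝ) 1) := by
  have hκc : ContinuousOn κ (Ico (0:ℝ) 1) := hcont.mono Ico_subset_Icc_self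
  apply ContinuousOn.mul
  · exact (hκc.pow n).mul sqrt_cont
  · apply ContinuousOn.rpow_const
    · exact continuousOn_const.sub (continuousOn_const.mul hκc)
    · intro z hz
      exact Or.inl (ne_of_gt (base_pos hp hm hw (Ico_subset_Icc_self hz)))

lemma norm_IG_le (hp : 1 < p) (hm : ∀ z ∈ Icc (0:ℝ) 1, κ z ∈ Icc 1 ((p + 1) / 2))
    (n : ℕ) {b w : ℝ} (hb : b < 2 / (p + 1)) (hw : w ≤ b) {z : ℝ} (hz : z ∈ Icc (0:ℝ) 1) :
    |IG κ n w z| ≤ ((p + 1) / 2) ^ n *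
      (min 1 (1 - b * ((p + 1) / 2))) ^ (-((n : ℝ) + 1/2)) * (Real.sqrt (1 - z ^ 2))⁻¹ := by
  obtain ⟨hk1, hk2⟩ := hm z hz
  have hk0 : (0:ℝ) ≤ κ z := by linarith
  have hD := D_pos hp hb
  have hbase : 0 < 1 - w * κ z := base_pos hp hm (lt_of_le_of_lt hw hb) hz
  rw [IG, abs_of_nonneg (by positivity)]
  have h1 : (1 - w * κ z) ^ (-((n : ℝ) + 1/2)) ≤
      (min 1 (1 - b * ((p + 1) / 2))) ^ (-((n : ℝ) + 1/2)) :=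
    Real.rpow_le_rpow_of_nonpos hD (base_lb hp hm hb hw hz) (by rw [neg_nonpos]; positivity)
  have h2 : κ z ^ n ≤ ((p + 1) / 2) ^ n := pow_le_pow_left₀ hk0 hk2 n
  have h3 : (0:ℝ) ≤ (Real.sqrt (1 - z ^ 2))⁻¹ := by positivity
  calc κ z ^ n * (Real.sqrt (1 - z ^ 2))⁻¹ * (1 - w * κ z) ^ (-((n : ℝ) + 1/2))
      ≤ ((p + 1) / 2) ^ n * (Real.sqrt (1 - z ^ 2))⁻¹ *
        (min 1 (1 - b * ((p + 1) / 2))) ^ (-((n : ℝ) + 1/2)) :=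
        mul_le_mul (mul_le_mul_of_nonneg_right h2 h3) h1 (by positivity) (by positivity)
    _ = _ := by ring

lemma intIG (hp : 1 < p) (hm : ∀ z ∈ Icc (0:ℝ) 1, κ z ∈ Icc 1 ((p + 1) / 2))
    (hcont : ContinuousOn κ (Icc (0:ℝ) 1)) (n : ℕ) {w : ℝ} (hw : w < 2 / (p + 1)) :
    IntervalIntegrable (IG κ n w) volume 0 1 := by
  apply (sqrt_int.const_mul (((p + 1) / 2) ^ n *
      (min 1 (1 - w * ((p + 1) / 2))) ^ (-((n : ℝ) + 1/2)))).mono_fun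
    (aesm_Ioc (contIG hp hm hcont n hw))
  rw [Filter.EventuallyLE, ae_restrict_iff' measurableSet_uIoc]
  apply Filter.Eventually.of_forall
  intro z hz
  rw [Set.uIoc_of_le (zero_le_one (α := ℝ))] at hz
  have hz' : z ∈ Icc (0:ℝ) 1 := Ioc_subset_Icc_self hz
  have := norm_IG_le hp hm n hw le_rfl hz'
  have hD := D_pos hp hw
  rw [Real.norm_eq_abs, Real.norm_eq_abs, abs_of_nonneg (mul_nonneg (mul_nonneg (by positivity)
    (Real.rpow_nonneg hD.le _)) (by positivity))]
  calc |IG κ n w z| ≤ _ := this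
    _ = _ := by ring

lemma G_pos (hp : 1 < p) (hm : ∀ z ∈ Icc (0:ℝ) 1, κ z ∈ Icc 1 ((p + 1) / 2))
    (hcont : ContinuousOn κ (Icc (0:ℝ) 1)) (n : ℕ) {w : ℝ} (hw : w < 2 / (p + 1)) :
    0 < G κ n w := by
  apply intervalIntegral.intervalIntegral_pos_of_pos_on (intIG hp hm hcont n hw)
  · intro z hz
    have hz' : z ∈ Icc (0:ℝ) 1 := Ioo_subset_Icc_self hz
    have h1 : (0:ℝ) < κ z := lt_of_lt_of_le one_pos (hm z hz').1
    have h2 : (0:ℝ) < 1 - z ^ 2 := by nlinarith [hz.1, hz.2]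
    have h3 : 0 < 1 - w * κ z := base_pos hp hm hw hz'
    rw [IG]
    positivity
  · exact one_pos


/-! ### Differentiation under the integral sign (complex) -/

lemma hasDerivAt_IGc (hp : 1 < p) (hm : ∀ z ∈ Icc (0:ℝ) 1, κ z ∈ Icc 1 ((p + 1) / 2))
    (n : ℕ) {w : ℂ} (hw : w.re < 2 / (p + 1)) {z : ℝ} (hz : z ∈ Icc (0:ℝ) 1) :
    HasDerivAt (fun w => IGc κ n w z)
      ((((n : ℝ) + 1/2 : ℝ) : ℂ) * IGc κ (n+1) w z) w := by
  have hbase : HasDerivAt (fun w : ℂ => 1 - w * (κ z : ℂ)) (-(κ z : ℂ)) w := by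
    simpa using ((hasDerivAt_id w).mul_const ((κ z : ℝ) : ℂ)).const_sub 1
  have hslit : ((1:ℂ) - w * (κ z : ℂ)) ∈ Complex.slitPlane := base_slit hp hm hw hz
  have hpow := hbase.cpow_const (c := ((↑(-((n : ℝ) + 1/2)) : ℂ))) hslit
  have hd := hpow.const_mul ((↑(κ z ^ n * (Real.sqrt (1 - z ^ 2))⁻¹) : ℂ))
  refine hd.congr_deriv ?_
  rw [IGc]
  have he : ((↑(-((n : ℝ) + 1/2)) : ℂ)) - 1 = (↑(-(((n+1 : ℕ) : ℝ) + 1/2)) : ℂ) := by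
    push_cast; ring
  rw [← he]
  push_cast
  ring

lemma hasDerivAt_Gc (hp : 1 < p) (hm : ∀ z ∈ Icc (0:ℝ) 1, κ z ∈ Icc 1 ((p + 1) / 2))
    (hcont : ContinuousOn κ (Icc (0:ℝ) 1)) (n : ℕ) {w₀ : ℂ} (hw : w₀.re < 2 / (p + 1)) :
    HasDerivAt (Gc κ n) ((((n : ℝ) + 1/2 : ℝ) : ℂ) * Gc κ (n+1) w₀) w₀ := by
  set ε := (2 / (p + 1) - w₀.re) / 2 with hεdef
  have hε0 : 0 < ε := by
    rw [hεdef]; linarith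
  set b := w₀.re + ε with hbdef
  have hbc : b < 2 / (p + 1) := by
    rw [hbdef, hεdef]; linarith
  have hDpos := D_pos hp hbc
  have hball : ∀ x : ℂ, x ∈ ball w₀ ε → x.re ≤ b := by
    intro x hx
    have h1 : ‖x - w₀‖ < ε := by
      rw [mem_ball, Complex.dist_eq] at hx; exact hx
    have h2 : x.re - w₀.re ≤ ‖x - w₀‖ := by
      have := Complex.re_le_norm (x - w₀)
      simpa using this
    rw [hbdef]; linarith
  have key := intervalIntegral.hasDerivAt_integral_of_dominated_loc_of_deriv_le
    (μ := volume) (a := (0:ℝ)) (b := (1:ℝ)) (x₀ := w₀)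
    (F := fun w z => IGc κ n w z)
    (F' := fun w z => (((n : ℝ) + 1/2 : ℝ) : ℂ) * IGc κ (n+1) w z)
    (bound := fun z => ((n : ℝ) + 1/2) * (((p + 1) / 2) ^ (n+1) *
      (min 1 (1 - b * ((p + 1) / 2))) ^ (-(((n+1 : ℕ) : ℝ) + 1/2)) * (Real.sqrt (1 - z ^ 2))⁻¹))
    (Metric.ball_mem_nhds w₀ hε0) ?_ ?_ ?_ ?_ ?_ ?_
  · have h2 := key.2
    rw [intervalIntegral.integral_const_mul] at h2
    exact h2
  · -- measurability, eventually
    have hU : {x : ℂ | x.re < 2 / (p + 1)} ∈ 𝓝 w₀ :=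
      (isOpen_lt Complex.continuous_re continuous_const).mem_nhds hw
    filter_upwards [hU] with x hx
    exact aesm_Ioc (contIGc hp hm hcont n hx)
  · exact intIGc hp hm hcont n hw
  · exact (aesm_Ioc (contIGc hp hm hcont (n+1) hw)).const_mul _
  · -- bound
    apply Filter.Eventually.of_forall
    intro t ht x hx
    rw [Set.uIoc_of_le (zero_le_one (α := ℝ))] at ht
    have ht' : t ∈ Icc (0:ℝ) 1 := Ioc_subset_Icc_self ht
    rw [norm_mul, Complex.norm_real, Real.norm_eq_abs, abs_of_nonneg (by positivity)]
    have hb1 := norm_IGc_le hp hm (n+1) hbc (hball x hx) ht'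
    calc ((n : ℝ) + 1/2) * ‖IGc κ (n+1) x t‖
        ≤ ((n : ℝ) + 1/2) * (((p + 1) / 2) ^ (n+1) *
          (min 1 (1 - b * ((p + 1) / 2))) ^ (-(((n+1 : ℕ) : ℝ) + 1/2)) *
          (Real.sqrt (1 - t ^ 2))⁻¹) := by
          apply mul_le_mul_of_nonneg_left _ (by positivity)
          exact_mod_cast hb1
      _ = _ := by norm_num
  · -- bound integrable
    exact (sqrt_int.const_mul _).const_mul _
  · -- differentiability
    apply Filter.Eventually.of_forall
    intro t ht x hx
    rw [Set.uIoc_of_le (zero_le_one (α := ℝ))] at ht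
    have hxc : x.re < 2 / (p + 1) := lt_of_le_of_lt (hball x hx) hbc
    exact hasDerivAt_IGc hp hm n hxc (Ioc_subset_Icc_self ht)

lemma Gc_real (hp : 1 < p) (hm : ∀ z ∈ Icc (0:ℝ) 1, κ z ∈ Icc 1 ((p + 1) / 2))
    (n : ℕ) {w : ℝ} (hw : w < 2 / (p + 1)) : Gc κ n ↑w = ((G κ n w : ℝ) : ℂ) := by
  rw [Gc, G, ← intervalIntegral.integral_ofReal]
  apply intervalIntegral.integral_congr
  intro z hz
  rw [Set.uIcc_of_le (zero_le_one (α := ℝ))] at hz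
  have hb : 0 < 1 - w * κ z := base_pos hp hm hw hz
  have h1 : ((1:ℂ) - (w : ℂ) * (κ z : ℂ)) = ((1 - w * κ z : ℝ) : ℂ) := by push_cast; ring
  simp only [IGc, IG]
  rw [h1, ← Complex.ofReal_cpow hb.le, ← Complex.ofReal_mul]

lemma hasDerivAt_G (hp : 1 < p) (hm : ∀ z ∈ Icc (0:ℝ) 1, κ z ∈ Icc 1 ((p + 1) / 2))
    (hcont : ContinuousOn κ (Icc (0:ℝ) 1)) (n : ℕ) {w₀ : ℝ} (hw : w₀ < 2 / (p + 1)) :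
    HasDerivAt (G κ n) (((n : ℝ) + 1/2) * G κ (n+1) w₀) w₀ := by
  have hre : (↑w₀ : ℂ).re < 2 / (p + 1) := by simpa using hw
  have h := (hasDerivAt_Gc hp hm hcont n hre).real_of_complex
  have hval : (((((n : ℝ) + 1/2 : ℝ) : ℂ)) * Gc κ (n+1) ↑w₀).re =
      ((n : ℝ) + 1/2) * G κ (n+1) w₀ := by
    rw [Gc_real hp hm (n+1) hw, ← Complex.ofReal_mul, Complex.ofReal_re]
  rw [hval] at h
  apply h.congr_of_eventuallyEq
  filter_upwards [Iio_mem_nhds hw] with x hx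
  rw [Gc_real hp hm n hx, Complex.ofReal_re]

lemma G_analyticAt (hp : 1 < p) (hm : ∀ z ∈ Icc (0:ℝ) 1, κ z ∈ Icc 1 ((p + 1) / 2))
    (hcont : ContinuousOn κ (Icc (0:ℝ) 1)) (n : ℕ) {w₀ : ℝ} (hw : w₀ < 2 / (p + 1)) :
    AnalyticAt ℝ (G κ n) w₀ := by
  have hU : IsOpen {w : ℂ | w.re < 2 / (p + 1)} := isOpen_lt Complex.continuous_re continuous_const
  have hA : AnalyticOnNhd ℂ (Gc κ n) {w : ℂ | w.re < 2 / (p + 1)} :=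
    DifferentiableOn.analyticOnNhd
      (fun w hw => (hasDerivAt_Gc hp hm hcont n hw).differentiableAt.differentiableWithinAt) hU
  have hB : AnalyticAt ℂ (Gc κ n) (Complex.ofRealCLM w₀) := hA _ (by simpa using hw)
  have hcomp : AnalyticAt ℝ (Complex.reCLM ∘ (Gc κ n) ∘ Complex.ofRealCLM) w₀ :=
    (Complex.reCLM.analyticAt _).comp ((hB.restrictScalars).comp (Complex.ofRealCLM.analyticAt w₀))
  apply hcomp.congr
  filter_upwards [Iio_mem_nhds hw] with x hx
  simp only [Function.comp_apply, Complex.ofRealCLM_apply, Complex.reCLM_apply]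
  rw [Gc_real hp hm n hx, Complex.ofReal_re]

/-! ### Relating `G` to the statement's integrals -/

lemma IG0_eq (hp : 1 < p) (hm : ∀ z ∈ Icc (0:ℝ) 1, κ z ∈ Icc 1 ((p + 1) / 2))
    {w : ℝ} (hw : w < 2 / (p + 1)) {z : ℝ} (hz : z ∈ Icc (0:ℝ) 1) :
    1 / (Real.sqrt (1 - z ^ 2) * Real.sqrt (1 - w * κ z)) = IG κ 0 w z := by
  have hb : 0 < 1 - w * κ z := base_pos hp hm hw hz
  simp only [IG, pow_zero, one_mul, Nat.cast_zero]
  rw [show -((0:ℝ) + 1/2) = -(1/2 : ℝ) by norm_num]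
  rw [Real.rpow_neg hb.le, ← Real.sqrt_eq_rpow, one_div, mul_inv]

lemma F_eq4G (hp : 1 < p) (hm : ∀ z ∈ Icc (0:ℝ) 1, κ z ∈ Icc 1 ((p + 1) / 2))
    {F : ℝ → ℝ}
    (hF : ∀ w : ℝ, 0 ≤ w → w < 2 / (p + 1) → F w =
      4 * ∫ z in (0:ℝ)..1, 1 / (Real.sqrt (1 - z ^ 2) * Real.sqrt (1 - w * κ z)))
    {w : ℝ} (hw : w ∈ Ico (0:ℝ) (2 / (p + 1))) : F w = 4 * G κ 0 w := by
  rw [hF w hw.1 hw.2, G]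
  congr 1
  apply intervalIntegral.integral_congr
  intro z hz
  rw [Set.uIcc_of_le (zero_le_one (α := ℝ))] at hz
  exact IG0_eq hp hm hw.2 hz

lemma G1_eq (hp : 1 < p) (hm : ∀ z ∈ Icc (0:ℝ) 1, κ z ∈ Icc 1 ((p + 1) / 2))
    {w : ℝ} (hw : w < 2 / (p + 1)) :
    G κ 1 w = ∫ z in (0:ℝ)..1,
      κ z / (Real.sqrt (1 - z ^ 2) * (1 - w * κ z) ^ ((3:ℝ)/2)) := by
  rw [G]
  apply intervalIntegral.integral_congr
  intro z hz
  rw [Set.uIcc_of_le (zero_le_one (α := ℝ))] at hz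
  have hb : 0 < 1 - w * κ z := base_pos hp hm hw hz
  simp only [IG, pow_one, Nat.cast_one]
  rw [show -((1:ℝ) + 1/2) = -((3:ℝ)/2) by norm_num]
  rw [Real.rpow_neg hb.le]
  ring

lemma G2_eq (hp : 1 < p) (hm : ∀ z ∈ Icc (0:ℝ) 1, κ z ∈ Icc 1 ((p + 1) / 2))
    {w : ℝ} (hw : w < 2 / (p + 1)) :
    G κ 2 w = ∫ z in (0:ℝ)..1,
      κ z ^ 2 / (Real.sqrt (1 - z ^ 2) * (1 - w * κ z) ^ ((5:ℝ)/2)) := by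
  rw [G]
  apply intervalIntegral.integral_congr
  intro z hz
  rw [Set.uIcc_of_le (zero_le_one (α := ℝ))] at hz
  have hb : 0 < 1 - w * κ z := base_pos hp hm hw hz
  simp only [IG, Nat.cast_ofNat]
  rw [show -((2:ℝ) + 1/2) = -((5:ℝ)/2) by norm_num]
  rw [Real.rpow_neg hb.le]
  ring

/-! ### The lower bound forcing divergence -/

lemma hc_bound (hp : 1 < p) : ∀ z ∈ Icc (0:ℝ) 1,
    (1 - z ^ 2) - (2/(p+1)) * (1 - z ^ (p+1)) ≤ (max 1 (p-1)) * (1 - z) ^ 2 := by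
  set A := max 1 (p-1) with hA
  have key := nonneg_of_deriv
    (fun z => A * (1 - z) ^ 2 - ((1 - z ^ 2) - (2/(p+1)) * (1 - z ^ (p+1))))
    (fun x => A * (2*x - 2) - (-(2*x) + (2/(p+1)) * ((p+1) * x ^ p))) ?_ ?_ ?_
  · intro z hz
    have := key z hz
    linarith
  · intro x
    have h1 : HasDerivAt (fun t : ℝ => t ^ (p+1)) ((p+1) * x ^ p) x := by
      have := Real.hasDerivAt_rpow_const (x := x) (p := p+1) (Or.inr (by linarith))
      rwa [show p + 1 - 1 = p by ring] at this
    have h2 : HasDerivAt (fun t : ℝ => (1 - t) ^ (2:ℕ)) ((2:ℕ) * (1 - x) ^ (2-1) * (-1)) x :=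
      ((hasDerivAt_id x).const_sub 1).pow 2
    have h3 : HasDerivAt (fun t : ℝ => t ^ (2:ℕ)) (2*x) x := by simpa using hasDerivAt_pow 2 x
    have hd := (h2.const_mul A).sub ((h3.const_sub 1).sub ((h1.const_sub 1).const_mul (2/(p+1))))
    refine hd.congr_deriv ?_
    ring
  · intro x hx
    obtain ⟨hx0, hx1⟩ := hx
    have hp1 : (0:ℝ) < p + 1 := by linarith
    have hfs : (2/(p+1)) * ((p+1) * x ^ p) = 2 * x ^ p := by field_simp
    have hsplit : x ^ (p - 1 + 1) = x ^ (p-1) * x := Real.rpow_add_one hx0.ne' (p-1)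
    rw [show p - 1 + 1 = p by ring] at hsplit
    have h1 := onesub_le (show 0 < p - 1 by linarith) x ⟨hx0.le, hx1.le⟩
    rw [← hA] at h1
    have h2 : 0 ≤ 1 - x ^ (p-1) := by
      have := Real.rpow_le_one hx0.le hx1.le (by linarith : (0:ℝ) ≤ p - 1)
      linarith
    show A * (2*x - 2) - (-(2*x) + (2/(p+1)) * ((p+1) * x ^ p)) ≤ 0
    rw [hfs]
    have h3 : x * (1 - x ^ (p-1)) ≤ 1 - x ^ (p-1) := by nlinarith
    nlinarith [h1, h2, h3, hsplit]
  · simp [Real.one_rpow]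

lemma F_lower (hp : 1 < p)
    (hκ : ∀ z : ℝ, 0 ≤ z → z < 1 → κ z = (1 - z ^ (p + 1)) / (1 - z ^ 2))
    (hm : ∀ z ∈ Icc (0:ℝ) 1, κ z ∈ Icc 1 ((p + 1) / 2))
    (hcont : ContinuousOn κ (Icc (0:ℝ) 1))
    {F : ℝ → ℝ}
    (hF : ∀ w : ℝ, 0 ≤ w → w < 2 / (p + 1) → F w =
      4 * ∫ z in (0:ℝ)..1, 1 / (Real.sqrt (1 - z ^ 2) * Real.sqrt (1 - w * κ z)))
    {w : ℝ} (hw0 : 0 ≤ w) (hwc : w < 2 / (p + 1)) :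
    4 / Real.sqrt (max 1 (p-1) + (p+1)) * (-Real.log (2 / (p + 1) - w)) ≤ F w := by
  set CC := max 1 (p-1) + (p+1) with hCC
  have hCC1 : (1:ℝ) ≤ CC := by
    have : (1:ℝ) ≤ max 1 (p-1) := le_max_left _ _
    rw [hCC]; linarith
  have hsqCC : 0 < Real.sqrt CC := Real.sqrt_pos.2 (by linarith)
  set ε := 2 / (p + 1) - w with hεdef
  have hε0 : 0 < ε := by rw [hεdef]; linarith
  have hε1 : ε < 1 := by
    have := c_lt_one hp
    rw [hεdef]; linarith
  have hεb : (0:ℝ) ≤ 1 - ε := by linarith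
  have h1le : (1:ℝ) - ε ≤ 1 := by linarith
  set f := fun z : ℝ => 1 / (Real.sqrt (1 - z ^ 2) * Real.sqrt (1 - w * κ z)) with hfdef
  have hf_nonneg : ∀ z : ℝ, 0 ≤ f z := fun z =>
    one_div_nonneg.2 (mul_nonneg (Real.sqrt_nonneg _) (Real.sqrt_nonneg _))
  have hint : IntervalIntegrable f volume 0 1 := by
    rw [intervalIntegrable_iff_integrableOn_Ioc_of_le (zero_le_one (α := ℝ))]
    apply ((intervalIntegrable_iff_integrableOn_Ioc_of_le (zero_le_one (α := ℝ))).1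
      (intIG hp hm hcont 0 hwc)).congr_fun _ measurableSet_Ioc
    intro z hz
    exact (IG0_eq hp hm hwc (Ioc_subset_Icc_self hz)).symm
  have hsub1 : Set.uIcc (0:ℝ) (1-ε) ⊆ Set.uIcc (0:ℝ) 1 := by
    rw [Set.uIcc_of_le hεb, Set.uIcc_of_le (zero_le_one (α := ℝ))]
    exact Icc_subset_Icc le_rfl h1le
  have hsub2 : Set.uIcc ((1:ℝ)-ε) 1 ⊆ Set.uIcc (0:ℝ) 1 := by
    rw [Set.uIcc_of_le h1le, Set.uIcc_of_le (zero_le_one (α := ℝ))]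
    exact Icc_subset_Icc hεb le_rfl
  -- pointwise comparison on [0, 1-ε]
  have key2 : ∀ z ∈ Icc (0:ℝ) (1-ε), (Real.sqrt CC * (1 - z))⁻¹ ≤ f z := by
    intro z hz
    have hz1 : z < 1 := by linarith [hz.2]
    have hzIcc : z ∈ Icc (0:ℝ) 1 := ⟨hz.1, hz1.le⟩
    have hbpos : 0 < 1 - w * κ z := base_pos hp hm hwc hzIcc
    have hzz : 0 < 1 - z ^ 2 := by nlinarith [hz.1, hz1]
    have hz2 : (1:ℝ) - z ^ 2 ≠ 0 := ne_of_gt hzz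
    have hprod : (1 - z ^ 2) * (1 - w * κ z) = (1 - z ^ 2) - w * (1 - z ^ (p+1)) := by
      rw [hκ z hz.1 hz1]
      field_simp
    have hb2 : (1 - z ^ 2) - w * (1 - z ^ (p+1)) ≤ CC * (1 - z) ^ 2 := by
      have h1 := hc_bound hp z hzIcc
      have h2 := bern (show (1:ℝ) ≤ p + 1 by linarith) z hzIcc
      have hεz : ε ≤ 1 - z := by linarith [hz.2]
      have h3 : 0 ≤ 1 - z ^ (p+1) := by
        have := Real.rpow_le_one hz.1 hz1.le (by linarith : (0:ℝ) ≤ p + 1)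
        linarith
      have expand : (1 - z ^ 2) - w * (1 - z ^ (p+1)) =
          ((1 - z ^ 2) - (2/(p+1)) * (1 - z ^ (p+1))) + ε * (1 - z ^ (p+1)) := by
        rw [hεdef]; ring
      have e1 : ε * (1 - z ^ (p+1)) ≤ ε * ((p+1) * (1 - z)) :=
        mul_le_mul_of_nonneg_left h2 hε0.le
      have e2 : ε * ((p+1) * (1 - z)) ≤ (1 - z) * ((p+1) * (1 - z)) :=
        mul_le_mul_of_nonneg_right hεz (by nlinarith)
      have e3 : (1 - z) * ((p+1) * (1 - z)) = (p+1) * (1 - z) ^ 2 := by ring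
      rw [expand, hCC]
      have hAT : (1 ⊔ (p - 1) + (p + 1)) * (1 - z) ^ 2 =
          (1 ⊔ (p - 1)) * (1 - z) ^ 2 + (p + 1) * (1 - z) ^ 2 := by ring
      rw [hAT]
      clear_value CC ε f
      linarith [h1, e1, e2, e3]
    have hd1 : Real.sqrt (1 - z ^ 2) * Real.sqrt (1 - w * κ z) =
        Real.sqrt ((1 - z ^ 2) * (1 - w * κ z)) := (Real.sqrt_mul hzz.le _).symm
    have hd2 : Real.sqrt ((1 - z ^ 2) * (1 - w * κ z)) ≤ Real.sqrt (CC * (1 - z) ^ 2) := by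
      apply Real.sqrt_le_sqrt
      rw [hprod]
      exact hb2
    have hd3 : Real.sqrt (CC * (1 - z) ^ 2) = Real.sqrt CC * (1 - z) := by
      rw [Real.sqrt_mul (by linarith) ((1 - z) ^ 2), Real.sqrt_sq (by linarith : (0:ℝ) ≤ 1 - z)]
    have hdpos : 0 < Real.sqrt (1 - z ^ 2) * Real.sqrt (1 - w * κ z) :=
      mul_pos (Real.sqrt_pos.2 hzz) (Real.sqrt_pos.2 hbpos)
    rw [hfdef]
    simp only [one_div]
    apply inv_anti₀ hdpos
    rw [hd1]
    exact le_trans hd2 (le_of_eq hd3)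
  -- the lower-bound integral
  have hℓcont : ContinuousOn (fun z : ℝ => (Real.sqrt CC * (1 - z))⁻¹) (Set.uIcc (0:ℝ) (1-ε)) := by
    rw [Set.uIcc_of_le hεb]
    apply ContinuousOn.inv₀
    · exact (continuous_const.mul (continuous_const.sub continuous_id)).continuousOn
    · intro z hz
      have : 0 < 1 - z := by linarith [hz.2]
      positivity
  have hmono : (∫ z in (0:ℝ)..(1-ε), (Real.sqrt CC * (1 - z))⁻¹) ≤ ∫ z in (0:ℝ)..(1-ε), f z := by
    apply intervalIntegral.integral_mono_on hεb (hℓcont.intervalIntegrable)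
      (hint.mono_set hsub1) key2
  have hpos2 : 0 ≤ ∫ z in (1-ε)..1, f z :=
    intervalIntegral.integral_nonneg h1le (fun u _ => hf_nonneg u)
  have hsplit : ∫ z in (0:ℝ)..1, f z =
      (∫ z in (0:ℝ)..(1-ε), f z) + ∫ z in (1-ε)..1, f z :=
    (intervalIntegral.integral_add_adjacent_intervals
      (hint.mono_set hsub1) (hint.mono_set hsub2)).symm
  have hlog : (∫ z in (0:ℝ)..(1-ε), (Real.sqrt CC * (1 - z))⁻¹) =
      (Real.sqrt CC)⁻¹ * (-Real.log ε) := by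
    have hrw : ∀ z : ℝ, (Real.sqrt CC * (1 - z))⁻¹ = (Real.sqrt CC)⁻¹ * (1 - z)⁻¹ :=
      fun z => by rw [mul_inv]
    simp only [hrw]
    rw [intervalIntegral.integral_const_mul]
    congr 1
    have hftc := intervalIntegral.integral_eq_sub_of_hasDerivAt
      (f := fun z : ℝ => -Real.log (1 - z)) (f' := fun z : ℝ => (1 - z)⁻¹)
      (a := (0:ℝ)) (b := 1-ε) ?_ ?_
    · rw [hftc]
      rw [show (1:ℝ) - (1 - ε) = ε by ring]
      norm_num
    · intro x hx
      rw [Set.uIcc_of_le hεb] at hx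
      have hx1 : 0 < 1 - x := by linarith [hx.2]
      have hinner : HasDerivAt (fun z : ℝ => 1 - z) (-1) x := by
        simpa using (hasDerivAt_id x).const_sub 1
      have h := ((Real.hasDerivAt_log (ne_of_gt hx1)).comp x hinner).neg
      convert h using 1
      · rfl
      ring
    · apply ContinuousOn.intervalIntegrable
      rw [Set.uIcc_of_le hεb]
      apply ContinuousOn.inv₀
      · exact (continuous_const.sub continuous_id).continuousOn
      · intro z hz
        have : 0 < 1 - z := by linarith [hz.2]
        exact ne_of_gt this
  rw [hF w hw0 hwc]
  have hchain : (Real.sqrt CC)⁻¹ * (-Real.log ε) ≤ ∫ z in (0:ℝ)..1, f z := by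
    rw [hsplit, ← hlog]
    linarith
  calc 4 / Real.sqrt CC * (-Real.log ε) = 4 * ((Real.sqrt CC)⁻¹ * (-Real.log ε)) := by
        rw [div_eq_mul_inv]; ring
    _ ≤ 4 * ∫ z in (0:ℝ)..1, f z := by linarith

end Main

end FFaux

/-- Properties of `F(w) = 4∫₀¹ dz/(√(1−z²)·√(1 − w·κ(z)))` on `[0, 2/(p+1))`, where
`κ(z) = (1 − z^{p+1})/(1 − z²)` on `[0,1)`, extended continuously by `κ(1) = (p+1)/2`. -/
theorem F_function_minus (p : ℝ) (hp : 1 < p)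
    (κ : ℝ → ℝ)
    (hκ : ∀ z : ℝ, 0 ≤ z → z < 1 → κ z = (1 - z ^ (p + 1)) / (1 - z ^ 2))
    (hκ1 : κ 1 = (p + 1) / 2)
    (F : ℝ → ℝ)
    (hF : ∀ w : ℝ, 0 ≤ w → w < 2 / (p + 1) → F w =
      4 * ∫ z in (0:ℝ)..1, 1 / (Real.sqrt (1 - z ^ 2) * Real.sqrt (1 - w * κ z))) :
    -- C^∞ on [0, 2/(p+1))
    ContDiffOn ℝ (⊤ : ℕ∞) F (Set.Ico 0 (2 / (p + 1))) ∧
    -- F(0) = 2π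
    F 0 = 2 * π ∧
    -- F(w) → ∞ as w → (2/(p+1))−
    Tendsto F (𝓝[<] (2 / (p + 1))) atTop ∧
    -- strictly increasing, with the derivative formula and F' > 0
    StrictMonoOn F (Set.Ico 0 (2 / (p + 1))) ∧
    (∀ w : ℝ, 0 ≤ w → w < 2 / (p + 1) →
      derivWithin F (Set.Ico 0 (2 / (p + 1))) w =
        2 * ∫ z in (0:ℝ)..1,
          κ z / (Real.sqrt (1 - z ^ 2) * (1 - w * κ z) ^ ((3:ℝ)/2)) ∧
      0 < derivWithin F (Set.Ico 0 (2 / (p + 1))) w) ∧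
    -- strictly convex, with the second derivative formula and F'' > 0
    StrictConvexOn ℝ (Set.Ico 0 (2 / (p + 1))) F ∧
    (∀ w : ℝ, 0 ≤ w → w < 2 / (p + 1) →
      derivWithin (derivWithin F (Set.Ico 0 (2 / (p + 1)))) (Set.Ico 0 (2 / (p + 1))) w =
        3 * ∫ z in (0:ℝ)..1,
          κ z ^ 2 / (Real.sqrt (1 - z ^ 2) * (1 - w * κ z) ^ ((5:ℝ)/2)) ∧
      0 < derivWithin (derivWithin F (Set.Ico 0 (2 / (p + 1)))) (Set.Ico 0 (2 / (p + 1))) w) := by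
  have hm := FFaux.kappa_mem hp hκ hκ1
  have hcont := FFaux.kappa_cont hp hκ hκ1
  have hc0 : 0 < 2 / (p + 1) := FFaux.c_pos hp
  have hEq : ∀ w ∈ Set.Ico (0:ℝ) (2 / (p + 1)), F w = 4 * FFaux.G κ 0 w :=
    fun w hw => FFaux.F_eq4G hp hm hF hw
  have hFcont : ContinuousOn F (Set.Ico 0 (2 / (p + 1))) := by
    have h1 : ContinuousOn (fun w => 4 * FFaux.G κ 0 w) (Set.Ico 0 (2 / (p + 1))) := fun w hw =>
      (continuousAt_const.mul
        (FFaux.hasDerivAt_G hp hm hcont 0 hw.2).differentiableAt.continuousAt).continuousWithinAt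
    exact h1.congr hEq
  have derivF_Ioo : ∀ x ∈ Set.Ioo (0:ℝ) (2 / (p + 1)), deriv F x = 2 * FFaux.G κ 1 x := by
    intro x hx
    have hev : F =ᶠ[𝓝 x] fun w => 4 * FFaux.G κ 0 w := by
      filter_upwards [isOpen_Ioo.mem_nhds hx] with y hy
      exact hEq y (Set.Ioo_subset_Ico_self hy)
    rw [hev.deriv_eq]
    have hd : HasDerivAt (fun w => 4 * FFaux.G κ 0 w)
        (4 * ((((0:ℕ):ℝ) + 1/2) * FFaux.G κ 1 x)) x :=
      (FFaux.hasDerivAt_G hp hm hcont 0 hx.2).const_mul 4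
    rw [hd.deriv]
    push_cast
    ring
  have hmonoF : StrictMonoOn F (Set.Ico 0 (2 / (p + 1))) := by
    apply strictMonoOn_of_deriv_pos (convex_Ico 0 (2 / (p + 1))) hFcont
    intro x hx
    rw [interior_Ico] at hx
    rw [derivF_Ioo x hx]
    have := FFaux.G_pos hp hm hcont 1 hx.2
    linarith
  have dW1 : ∀ w ∈ Set.Ico (0:ℝ) (2 / (p + 1)),
      derivWithin F (Set.Ico 0 (2 / (p + 1))) w = 2 * FFaux.G κ 1 w := by
    intro w hw
    have h1 : derivWithin F (Set.Ico 0 (2 / (p + 1))) w =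
        derivWithin (fun w => 4 * FFaux.G κ 0 w) (Set.Ico 0 (2 / (p + 1))) w :=
      derivWithin_congr hEq (hEq w hw)
    have h2 : HasDerivWithinAt (fun w => 4 * FFaux.G κ 0 w)
        (4 * ((((0:ℕ):ℝ) + 1/2) * FFaux.G κ 1 w)) (Set.Ico 0 (2 / (p + 1))) w :=
      ((FFaux.hasDerivAt_G hp hm hcont 0 hw.2).const_mul 4).hasDerivWithinAt
    rw [h1, h2.derivWithin (uniqueDiffOn_Ico 0 (2 / (p + 1)) w hw)]
    push_cast
    ring
  have dW2 : ∀ w ∈ Set.Ico (0:ℝ) (2 / (p + 1)),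
      derivWithin (derivWithin F (Set.Ico 0 (2 / (p + 1)))) (Set.Ico 0 (2 / (p + 1))) w =
        3 * FFaux.G κ 2 w := by
    intro w hw
    have h1 : derivWithin (derivWithin F (Set.Ico 0 (2 / (p + 1)))) (Set.Ico 0 (2 / (p + 1))) w =
        derivWithin (fun y => 2 * FFaux.G κ 1 y) (Set.Ico 0 (2 / (p + 1))) w :=
      derivWithin_congr dW1 (dW1 w hw)
    have h2 : HasDerivWithinAt (fun y => 2 * FFaux.G κ 1 y)
        (2 * ((((1:ℕ):ℝ) + 1/2) * FFaux.G κ 2 w)) (Set.Ico 0 (2 / (p + 1))) w :=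
      ((FFaux.hasDerivAt_G hp hm hcont 1 hw.2).const_mul 2).hasDerivWithinAt
    rw [h1, h2.derivWithin (uniqueDiffOn_Ico 0 (2 / (p + 1)) w hw)]
    push_cast
    ring
  refine ⟨?_, ?_, ?_, hmonoF, ?_, ?_, ?_⟩
  · -- C^∞ (indeed C^ω)
    have hA : AnalyticOn ℝ F (Set.Ico 0 (2 / (p + 1))) := by
      intro w hw
      have h4 : AnalyticAt ℝ (fun w => 4 * FFaux.G κ 0 w) w :=
        analyticAt_const.mul (FFaux.G_analyticAt hp hm hcont 0 hw.2)
      exact h4.analyticWithinAt.congr hEq (hEq w hw)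
    exact hA.contDiffOn (uniqueDiffOn_Ico 0 (2 / (p + 1)))
  · -- F 0 = 2π
    rw [hF 0 le_rfl hc0]
    have h0 : (fun z : ℝ => 1 / (Real.sqrt (1 - z ^ 2) * Real.sqrt (1 - 0 * κ z))) =
        fun z : ℝ => (Real.sqrt (1 - z ^ 2))⁻¹ := by
      funext z
      rw [zero_mul, sub_zero, Real.sqrt_one, mul_one, one_div]
    rw [h0, FFaux.sqrt_integral]
    ring
  · -- divergence at the right endpoint
    have hCCpos : 0 < 4 / Real.sqrt (max 1 (p-1) + (p+1)) := by
      have h1 : (1:ℝ) ≤ max 1 (p-1) := le_max_left _ _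
      have h2 : 0 < Real.sqrt (max 1 (p-1) + (p+1)) := Real.sqrt_pos.2 (by linarith)
      positivity
    apply tendsto_atTop_mono' (𝓝[<] (2 / (p + 1)))
      (f₁ := fun w => 4 / Real.sqrt (max 1 (p-1) + (p+1)) * (-Real.log (2 / (p + 1) - w)))
    · filter_upwards [Ioo_mem_nhdsLT_of_mem
        (show (2 / (p + 1) : ℝ) ∈ Set.Ioc 0 (2 / (p + 1)) from ⟨hc0, le_rfl⟩)] with w hw
      exact FFaux.F_lower hp hκ hm hcont hF hw.1.le hw.2
    · apply Filter.Tendsto.const_mul_atTop hCCpos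
      have t0 : Tendsto (fun w : ℝ => 2 / (p + 1) - w) (𝓝[<] (2 / (p + 1))) (𝓝[>] 0) := by
        apply tendsto_nhdsWithin_of_tendsto_nhds_of_eventually_within
        · have h1 : Tendsto (fun w : ℝ => 2 / (p + 1) - w) (𝓝 (2 / (p + 1)))
              (𝓝 (2 / (p + 1) - 2 / (p + 1))) :=
            (continuous_const.sub continuous_id).tendsto _
          rw [sub_self] at h1
          exact h1.mono_left nhdsWithin_le_nhds
        · filter_upwards [self_mem_nhdsWithin] with w hw
          exact Set.mem_Ioi.2 (sub_pos.2 hw)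
      exact tendsto_neg_atBot_atTop.comp (Real.tendsto_log_nhdsGT_zero.comp t0)
  · -- first derivative
    intro w hw0 hwc
    constructor
    · rw [dW1 w ⟨hw0, hwc⟩, FFaux.G1_eq hp hm hwc]
    · rw [dW1 w ⟨hw0, hwc⟩]
      have := FFaux.G_pos hp hm hcont 1 hwc
      linarith
  · -- strict convexity
    apply strictConvexOn_of_deriv2_pos (convex_Ico 0 (2 / (p + 1))) hFcont
    intro x hx
    rw [interior_Ico] at hx
    show 0 < deriv (deriv F) x
    have hev2 : deriv F =ᶠ[𝓝 x] fun y => 2 * FFaux.G κ 1 y := by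
      filter_upwards [isOpen_Ioo.mem_nhds hx] with y hy
      exact derivF_Ioo y hy
    rw [hev2.deriv_eq]
    have hd : HasDerivAt (fun y => 2 * FFaux.G κ 1 y)
        (2 * ((((1:ℕ):ℝ) + 1/2) * FFaux.G κ 2 x)) x :=
      (FFaux.hasDerivAt_G hp hm hcont 1 hx.2).const_mul 2
    rw [hd.deriv]
    have := FFaux.G_pos hp hm hcont 2 hx.2
    push_cast
    linarith
  · -- second derivative
    intro w hw0 hwc
    constructor
    · rw [dW2 w ⟨hw0, hwc⟩, FFaux.G2_eq hp hm hwc]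
    · rw [dW2 w ⟨hw0, hwc⟩]
      have := FFaux.G_pos hp hm hcont 2 hwc
      linarith
end
end

section
/- Let p > 1 and let y : ℝ → ℝ be a C² solution of ÿ + y + |y|^{p−1}y = 0 with (y(0), ẏ(0)) ≠ (0,0), and set c = ẏ(0)² + y(0)² + (2/(p+1))|y(0)|^{p+1} > 0. Then y is periodic with minimal period L(c) = 4∫₀¹ dz/√(1 − z² + (2/(p+1))N(c)^{p−1}(1 − z^{p+1})) where N(c) > 0 solves N(c)² + (2/(p+1))N(c)^{p+1} = c, and max_{t∈ℝ}|y(t)| = N(c). -/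
/-!
The energy `ẏ² + V(y)`, `V(x) = x² + (2/(p+1))|x|^{p+1}`, is conserved, and `V` is even and
strictly increasing in `|x|`; so a solution at energy `c = V(N)` stays in `[-N, N]` and `ẏ`
vanishes exactly where `|y| = N`. While `ẏ > 0` the time map `T(x) = ∫_{-N}^x du/√(c - V(u))`
satisfies `d/dt T(y(t)) = 1`, and `T(N)` is finite because `c - V(u) ≥ N(N - |u|)`. Hence a
solution cannot rise forever: started at rest at `-N` (where `ÿ = N + N^p > 0`) it
reaches `N` after exactly `T(N)`, and by the symmetry `y ↦ -y` it returns to `-N` after another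
`T(N)`. Uniqueness for the Lipschitz phase-plane system then makes `y` periodic with period
`2T(N)`, while `y < N` strictly in between, which gives minimality. Rescaling `u = Nz` turns
`2T(N)` into the stated integral.
-/

noncomputable section
open Real Filter Topology

lemma HasDerivAt.eventually_nhdsGT_lt {f : ℝ → ℝ} {f' a : ℝ} (hf : HasDerivAt f f' a)
    (hf' : 0 < f') : ∀ᶠ t in 𝓝[>] a, f a < f t := by
  have hslope : Tendsto (slope f a) (𝓝[>] a) (𝓝 f') :=
    (hasDerivAt_iff_tendsto_slope.1 hf).mono_left (nhdsGT_le_nhdsNE a)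
  filter_upwards [hslope.eventually (lt_mem_nhds hf'), self_mem_nhdsWithin] with t hs (ht : a < t)
  rw [slope_def_field] at hs
  exact sub_pos.1 ((div_pos_iff_of_pos_right (sub_pos.2 ht)).1 hs)

lemma hasDerivAt_abs_rpow_mul_self {q : ℝ} (hq : 0 < q) (x : ℝ) :
    HasDerivAt (fun x : ℝ => |x| ^ q * x) ((q + 1) * |x| ^ q) x := by
  rcases eq_or_ne x 0 with rfl | hx
  · have hsmall : Tendsto (fun h : ℝ => |h| ^ q) (𝓝 0) (𝓝 0) := by
      simpa [zero_rpow hq.ne'] using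
        ((continuous_abs.rpow_const fun _ => Or.inr hq.le).tendsto (0 : ℝ))
    rw [hasDerivAt_iff_isLittleO_nhds_zero]
    simpa [zero_rpow hq.ne'] using (Asymptotics.isLittleO_one_iff (F := ℝ)).2 hsmall
      |>.mul_isBigO (Asymptotics.isBigO_refl (fun h : ℝ => h) _)
  · have habs : |x| ≠ 0 := abs_ne_zero.2 hx
    refine (((hasDerivAt_abs hx).rpow_const (Or.inl habs)).mul (hasDerivAt_id x)).congr_deriv ?_
    have hsign : (SignType.sign x : ℝ) * x = |x| := sign_mul_self x
    have hpow : |x| ^ (q - 1) * |x| = |x| ^ q := by rw [← rpow_add_one habs]; ring_nf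
    simp only [id]
    linear_combination (q * |x| ^ (q - 1)) * hsign + q * hpow

namespace Oscillator
open Set MeasureTheory intervalIntegral

variable {p : ℝ}

/-- The first integral is `A₊(ξ, η) = η² + potential p ξ`. -/
def potential (p x : ℝ) : ℝ := x ^ 2 + 2 / (p + 1) * |x| ^ (p + 1)

def force (p x : ℝ) : ℝ := x + |x| ^ (p - 1) * x

lemma continuous_potential (hp : 1 < p) : Continuous (potential p) := by
  unfold potential
  fun_prop (discharger := linarith)

@[simp] lemma potential_neg (x : ℝ) : potential p (-x) = potential p x := by simp [potential]

@[simp] lemma potential_abs (x : ℝ) : potential p |x| = potential p x := by simp [potential]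

@[simp] lemma force_neg (x : ℝ) : force p (-x) = -force p x := by simp [force]; ring

lemma hasDerivAt_potential (hp : 1 < p) (x : ℝ) :
    HasDerivAt (potential p) (2 * force p x) x := by
  have hp1 : p + 1 ≠ 0 := by linarith
  refine ((hasDerivAt_pow 2 x).add ((hasDerivAt_abs_rpow x (by linarith : 1 < p + 1)).const_mul
    (2 / (p + 1)))).congr_deriv ?_
  rw [force, show p + 1 - 2 = p - 1 by ring]
  field_simp
  ring

lemma potential_pos (hp : 1 < p) {x : ℝ} (hx : x ≠ 0) : 0 < potential p x := by
  unfold potential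
  have : 0 < x ^ 2 := by positivity
  have : 0 ≤ 2 / (p + 1) * |x| ^ (p + 1) := by positivity
  linarith

lemma sq_le_potential (hp : 1 < p) (x : ℝ) : x ^ 2 ≤ potential p x := by
  unfold potential
  have : 0 ≤ 2 / (p + 1) * |x| ^ (p + 1) := by positivity
  linarith

lemma strictMonoOn_potential (hp : 1 < p) : StrictMonoOn (potential p) (Ici 0) := by
  intro a (ha : 0 ≤ a) b (hb : 0 ≤ b) hab
  unfold potential
  rw [abs_of_nonneg ha, abs_of_nonneg hb]
  have : a ^ (p + 1) < b ^ (p + 1) := rpow_lt_rpow ha hab (by linarith)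
  have : a ^ 2 < b ^ 2 := by gcongr
  have : 0 < 2 / (p + 1) := by positivity
  nlinarith

lemma potential_le_potential_iff (hp : 1 < p) {N : ℝ} (hN : 0 ≤ N) (x : ℝ) :
    potential p x ≤ potential p N ↔ |x| ≤ N := by
  rw [← potential_abs x]
  exact (strictMonoOn_potential hp).le_iff_le (abs_nonneg x) hN

lemma potential_lt_potential_iff (hp : 1 < p) {N : ℝ} (hN : 0 ≤ N) (x : ℝ) :
    potential p x < potential p N ↔ |x| < N := by
  rw [← potential_abs x]
  exact (strictMonoOn_potential hp).lt_iff_lt (abs_nonneg x) hN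

lemma potential_eq_potential_iff (hp : 1 < p) {N : ℝ} (hN : 0 ≤ N) (x : ℝ) :
    potential p x = potential p N ↔ |x| = N := by
  rw [← potential_abs x]
  exact (strictMonoOn_potential hp).injOn.eq_iff (abs_nonneg x) hN

lemma mul_sub_abs_le_potential_sub (hp : 1 < p) {N x : ℝ} (hx : |x| ≤ N) :
    N * (N - |x|) ≤ potential p N - potential p x := by
  have hN : 0 ≤ N := (abs_nonneg x).trans hx
  have : |x| ^ (p + 1) ≤ N ^ (p + 1) := rpow_le_rpow (abs_nonneg x) hx (by linarith)
  have : 0 < 2 / (p + 1) := by positivity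
  unfold potential
  rw [abs_of_nonneg hN, ← sq_abs x]
  nlinarith [abs_nonneg x]

lemma contDiff_force (hp : 1 < p) : ContDiff ℝ 1 (force p) := by
  have hderiv (x : ℝ) : HasDerivAt (force p) (1 + p * |x| ^ (p - 1)) x := by
    refine ((hasDerivAt_id x).add
      (hasDerivAt_abs_rpow_mul_self (by linarith : 0 < p - 1) x)).congr_deriv ?_
    ring
  rw [contDiff_one_iff_deriv]
  refine ⟨fun x => (hderiv x).differentiableAt, ?_⟩
  rw [funext fun x => (hderiv x).deriv]
  fun_prop (discharger := linarith)

def phaseField (p : ℝ) (q : ℝ × ℝ) : ℝ × ℝ := (q.2, -force p q.1)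

lemma contDiff_phaseField (hp : 1 < p) : ContDiff ℝ 1 (phaseField p) :=
  contDiff_snd.prodMk ((contDiff_force hp).comp contDiff_fst).neg

structure IsSolution (p : ℝ) (y : ℝ → ℝ) : Prop where
  contDiff : ContDiff ℝ 2 y
  deriv_deriv : ∀ t, deriv (deriv y) t = -force p (y t)

def energy (p : ℝ) (y : ℝ → ℝ) (t : ℝ) : ℝ := deriv y t ^ 2 + potential p (y t)

namespace IsSolution

variable {y z : ℝ → ℝ}

lemma differentiable (hy : IsSolution p y) : Differentiable ℝ y :=
  hy.contDiff.differentiable (by norm_num)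

lemma differentiable_deriv (hy : IsSolution p y) : Differentiable ℝ (deriv y) :=
  (hy.contDiff.deriv' (n := 1)).differentiable (by norm_num)

lemma continuous_deriv (hy : IsSolution p y) : Continuous (deriv y) :=
  hy.differentiable_deriv.continuous

lemma hasDerivAt (hy : IsSolution p y) (t : ℝ) : HasDerivAt y (deriv y t) t :=
  (hy.differentiable t).hasDerivAt

lemma hasDerivAt_deriv (hy : IsSolution p y) (t : ℝ) :
    HasDerivAt (deriv y) (-force p (y t)) t :=
  hy.deriv_deriv t ▸ (hy.differentiable_deriv t).hasDerivAt

lemma energy_eq (hp : 1 < p) (hy : IsSolution p y) (s t : ℝ) : energy p y s = energy p y t := by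
  have hE (t : ℝ) : HasDerivAt (energy p y) 0 t := by
    refine (((hy.hasDerivAt_deriv t).pow 2).add
      ((hasDerivAt_potential hp (y t)).comp t (hy.hasDerivAt t))).congr_deriv ?_
    ring
  exact is_const_of_deriv_eq_zero (fun t => (hE t).differentiableAt) (fun t => (hE t).deriv) s t

lemma neg (hy : IsSolution p y) : IsSolution p (-y) where
  contDiff := hy.contDiff.neg
  deriv_deriv t := by
    rw [deriv.neg', show (fun t => -deriv y t) = -deriv y from rfl, deriv.neg, hy.deriv_deriv]
    simp

lemma comp_add_const (hy : IsSolution p y) (a : ℝ) : IsSolution p (fun t => y (t + a)) where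
  contDiff := hy.contDiff.comp (contDiff_id.add contDiff_const)
  deriv_deriv t := by
    simp only [funext fun t => deriv_comp_add_const y a t, deriv_comp_add_const _ a t,
      hy.deriv_deriv]

lemma hasDerivAt_phase (hy : IsSolution p y) (t : ℝ) :
    HasDerivAt (fun t => (y t, deriv y t)) (phaseField p (y t, deriv y t)) t :=
  (hy.hasDerivAt t).prodMk (hy.hasDerivAt_deriv t)

lemma phase_mem_Icc (hp : 1 < p) (hy : IsSolution p y) (s t : ℝ) :
    (y t, deriv y t) ∈ Icc (-√(energy p y s)) √(energy p y s) ×ˢ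
      Icc (-√(energy p y s)) √(energy p y s) := by
  have hE : deriv y t ^ 2 + potential p (y t) = energy p y s := hy.energy_eq hp t s
  have := sq_le_potential hp (y t)
  exact ⟨abs_le.mp (abs_le_sqrt (by nlinarith)), abs_le.mp (abs_le_sqrt (by nlinarith))⟩

lemma eq_of_eq_of_deriv_eq (hp : 1 < p) (hy : IsSolution p y) (hz : IsSolution p z) {t₀ : ℝ}
    (h₀ : y t₀ = z t₀) (h₁ : deriv y t₀ = deriv z t₀) : y = z := by
  have hE : energy p z t₀ = energy p y t₀ := by rw [energy, energy, h₀, h₁]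
  obtain ⟨K, hK⟩ := (contDiff_phaseField hp).locallyLipschitz.locallyLipschitzOn
    |>.exists_lipschitzOnWith_of_compact (isCompact_Icc.prod isCompact_Icc)
  have := ODE_solution_unique_univ (fun _ => hK)
    (fun t => ⟨hy.hasDerivAt_phase t, hy.phase_mem_Icc hp t₀ t⟩)
    (fun t => ⟨hz.hasDerivAt_phase t, hE ▸ hz.phase_mem_Icc hp t₀ t⟩)
    (show (y t₀, deriv y t₀) = (z t₀, deriv z t₀) by rw [h₀, h₁])
  exact funext fun t => congrArg Prod.fst (congrFun this t)

lemma periodic_of_eq_of_deriv_eq (hp : 1 < p) (hy : IsSolution p y) {a T : ℝ}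
    (h₀ : y (a + T) = y a) (h₁ : deriv y (a + T) = deriv y a) : Function.Periodic y T :=
  congrFun ((hy.comp_add_const T).eq_of_eq_of_deriv_eq hp hy h₀
    (by rwa [deriv_comp_add_const]))

lemma strictMonoOn_of_deriv_pos (hy : IsSolution p y) {a b : ℝ}
    (hpos : ∀ t ∈ Ioo a b, 0 < deriv y t) : StrictMonoOn y (Icc a b) :=
  strictMonoOn_of_hasDerivWithinAt_pos (convex_Icc a b) hy.differentiable.continuous.continuousOn
    (fun t _ => (hy.hasDerivAt t).hasDerivWithinAt)
    (fun t ht => hpos t (by rwa [interior_Icc] at ht))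

end IsSolution

@[simp] lemma energy_neg (y : ℝ → ℝ) (t : ℝ) : energy p (-y) t = energy p y t := by
  simp [energy, deriv.neg']

def slowness (p N x : ℝ) : ℝ := (√(potential p N - potential p x))⁻¹

def timeMap (p N x : ℝ) : ℝ := ∫ u in (-N)..x, slowness p N u

section timeMap

variable {N : ℝ}

@[simp] lemma slowness_neg (x : ℝ) : slowness p N (-x) = slowness p N x := by simp [slowness]

lemma measurable_slowness (hp : 1 < p) : Measurable (slowness p N) :=
  (continuous_const.sub (continuous_potential hp)).sqrt.measurable.inv

lemma slowness_nonneg (x : ℝ) : 0 ≤ slowness p N x := inv_nonneg.2 (sqrt_nonneg _)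

lemma potential_sub_pos (hp : 1 < p) {x : ℝ} (hx : |x| < N) :
    0 < potential p N - potential p x :=
  sub_pos.2 ((potential_lt_potential_iff hp ((abs_nonneg x).trans hx.le) x).2 hx)

lemma continuousAt_slowness (hp : 1 < p) {x : ℝ} (hx : |x| < N) :
    ContinuousAt (slowness p N) x :=
  ((continuous_const.sub (continuous_potential hp)).sqrt.continuousAt).inv₀
    (sqrt_pos.2 (potential_sub_pos hp hx)).ne'

lemma slowness_le (hp : 1 < p) (hN : 0 < N) {x : ℝ} (hx : x ∈ Ioc 0 N) :
    slowness p N x ≤ (√N)⁻¹ * (N - x) ^ (-(1 / 2) : ℝ) := by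
  rcases hx.2.eq_or_lt with rfl | hlt
  · simp [slowness]
  have habs : |x| = x := abs_of_pos hx.1
  have hbound := mul_sub_abs_le_potential_sub (p := p) hp (habs.le.trans hx.2)
  rw [habs] at hbound
  rw [rpow_neg (by linarith), ← sqrt_eq_rpow, ← mul_inv, ← sqrt_mul hN.le, slowness]
  exact inv_anti₀ (sqrt_pos.2 (mul_pos hN (by linarith))) (sqrt_le_sqrt hbound)

lemma intervalIntegrable_slowness_zero_self (hp : 1 < p) (hN : 0 < N) :
    IntervalIntegrable (slowness p N) volume 0 N := by
  have hrpow : IntervalIntegrable (fun x => (N - x) ^ (-(1 / 2) : ℝ)) volume 0 N := by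
    simpa using (intervalIntegral.intervalIntegrable_rpow' (a := N) (b := 0)
      (by norm_num : (-1 : ℝ) < -(1 / 2))).comp_sub_left N
  refine (hrpow.const_mul (√N)⁻¹).mono_fun' (measurable_slowness hp).aestronglyMeasurable ?_
  refine ae_restrict_of_forall_mem measurableSet_uIoc fun x hx => ?_
  rw [uIoc_of_le hN.le] at hx
  exact (norm_of_nonneg (slowness_nonneg x)).trans_le (slowness_le hp hN hx)

lemma intervalIntegrable_slowness (hp : 1 < p) (hN : 0 < N) {a b : ℝ} (ha : a ∈ Icc (-N) N)
    (hb : b ∈ Icc (-N) N) : IntervalIntegrable (slowness p N) volume a b := by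
  have hhalf := intervalIntegrable_slowness_zero_self hp hN
  have hsymm : IntervalIntegrable (slowness p N) volume (-N) 0 := by
    simpa using ((IntervalIntegrable.iff_comp_neg (f := slowness p N)).1 hhalf).symm
  refine (hsymm.trans hhalf).mono_set ?_
  rw [uIcc_of_le (by linarith : -N ≤ N)]
  exact uIcc_subset_Icc ha hb

lemma continuousOn_timeMap (hp : 1 < p) (hN : 0 < N) :
    ContinuousOn (timeMap p N) (Icc (-N) N) := by
  have hNN : -N ≤ N := by linarith
  have h := continuousOn_primitive_interval'
    (intervalIntegrable_slowness hp hN (left_mem_Icc.2 hNN) (right_mem_Icc.2 hNN))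
    (left_mem_uIcc (a := -N) (b := N))
  rwa [uIcc_of_le hNN] at h

lemma hasDerivAt_timeMap (hp : 1 < p) (hN : 0 < N) {x : ℝ} (hx : |x| < N) :
    HasDerivAt (timeMap p N) (slowness p N x) x := by
  have hx' := abs_lt.1 hx
  exact integral_hasDerivAt_right
    (intervalIntegrable_slowness hp hN (left_mem_Icc.2 (by linarith)) ⟨hx'.1.le, hx'.2.le⟩)
    (measurable_slowness hp).stronglyMeasurable.stronglyMeasurableAtFilter
    (continuousAt_slowness hp hx)

lemma monotoneOn_timeMap (hp : 1 < p) (hN : 0 < N) : MonotoneOn (timeMap p N) (Icc (-N) N) :=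
  monotoneOn_of_hasDerivWithinAt_nonneg (convex_Icc _ _) (continuousOn_timeMap hp hN)
    (fun x hx => (hasDerivAt_timeMap hp hN
      (abs_lt.2 (by rwa [interior_Icc] at hx))).hasDerivWithinAt)
    (fun x _ => slowness_nonneg x)

@[simp] lemma timeMap_neg_self : timeMap p N (-N) = 0 := integral_same

lemma timeMap_nonneg {x : ℝ} (hx : -N ≤ x) : 0 ≤ timeMap p N x :=
  integral_nonneg hx fun u _ => slowness_nonneg u

end timeMap

lemma potential_sub_potential_mul {N z : ℝ} (hN : 0 < N) (hz : 0 ≤ z) :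
    potential p N - potential p (N * z) =
      N ^ 2 * (1 - z ^ 2 + 2 / (p + 1) * N ^ (p - 1) * (1 - z ^ (p + 1))) := by
  have hsplit : N ^ (p + 1) = N ^ (p - 1) * N ^ 2 := by
    rw [← rpow_natCast, ← rpow_add hN]; ring_nf
  simp only [potential, abs_of_pos hN, abs_of_nonneg (mul_nonneg hN.le hz),
    mul_rpow hN.le hz, hsplit]
  ring

lemma timeMap_self_eq (hp : 1 < p) {N : ℝ} (hN : 0 < N) :
    timeMap p N N = 2 * ∫ z in (0 : ℝ)..1,
      1 / √(1 - z ^ 2 + 2 / (p + 1) * N ^ (p - 1) * (1 - z ^ (p + 1))) := by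
  have hNN : -N ≤ N := by linarith
  have hsplit : timeMap p N N =
      (∫ u in (-N)..0, slowness p N u) + ∫ u in (0 : ℝ)..N, slowness p N u :=
    (integral_add_adjacent_intervals
      (intervalIntegrable_slowness hp hN (left_mem_Icc.2 hNN) ⟨by linarith, hN.le⟩)
      (intervalIntegrable_slowness hp hN ⟨by linarith, hN.le⟩ (right_mem_Icc.2 hNN))).symm
  have hsymm : ∫ u in (-N)..0, slowness p N u = ∫ u in (0 : ℝ)..N, slowness p N u := by
    simpa using (integral_comp_neg (a := 0) (b := N) (slowness p N)).symm
  have hscale : ∫ u in (0 : ℝ)..N, slowness p N u =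
      ∫ z in (0 : ℝ)..1, N * slowness p N (N * z) := by
    rw [intervalIntegral.integral_const_mul, ← smul_eq_mul, smul_integral_comp_mul_left,
      mul_zero, mul_one]
  have hpoint : EqOn (fun z => N * slowness p N (N * z))
      (fun z => 1 / √(1 - z ^ 2 + 2 / (p + 1) * N ^ (p - 1) * (1 - z ^ (p + 1)))) (uIcc 0 1) := by
    intro z hz
    rw [uIcc_of_le zero_le_one] at hz
    simp only [slowness, potential_sub_potential_mul hN hz.1, sqrt_mul (sq_nonneg N),
      sqrt_sq hN.le]
    field_simp
  rw [hsplit, hsymm, hscale, integral_congr hpoint]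
  ring

structure IsSolutionAtLevel (p N : ℝ) (y : ℝ → ℝ) : Prop where
  isSolution : IsSolution p y
  energy_eq : ∀ t, energy p y t = potential p N

namespace IsSolutionAtLevel

variable {N : ℝ} {y : ℝ → ℝ}

lemma neg (hy : IsSolutionAtLevel p N y) : IsSolutionAtLevel p N (-y) :=
  ⟨hy.isSolution.neg, fun t => (energy_neg y t).trans (hy.energy_eq t)⟩

lemma sq_deriv (hy : IsSolutionAtLevel p N y) (t : ℝ) :
    deriv y t ^ 2 = potential p N - potential p (y t) := by
  rw [← hy.energy_eq t, energy]; ring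

lemma abs_le (hp : 1 < p) (hN : 0 < N) (hy : IsSolutionAtLevel p N y) (t : ℝ) : |y t| ≤ N :=
  (potential_le_potential_iff hp hN.le _).1 (by nlinarith [hy.sq_deriv t, sq_nonneg (deriv y t)])

lemma mem_Icc (hp : 1 < p) (hN : 0 < N) (hy : IsSolutionAtLevel p N y) (t : ℝ) :
    y t ∈ Icc (-N) N :=
  _root_.abs_le.1 (hy.abs_le hp hN t)

lemma abs_eq_of_deriv_eq_zero (hp : 1 < p) (hN : 0 < N) (hy : IsSolutionAtLevel p N y) {t : ℝ}
    (ht : deriv y t = 0) : |y t| = N :=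
  (potential_eq_potential_iff hp hN.le _).1 (by nlinarith [hy.sq_deriv t])

lemma abs_lt_of_deriv_ne_zero (hp : 1 < p) (hN : 0 < N) (hy : IsSolutionAtLevel p N y) {t : ℝ}
    (ht : deriv y t ≠ 0) : |y t| < N := by
  refine (hy.abs_le hp hN t).lt_of_ne fun h => ht (pow_eq_zero_iff two_ne_zero |>.1 ?_)
  rw [hy.sq_deriv, (potential_eq_potential_iff hp hN.le _).2 h, sub_self]

lemma slowness_mul_deriv (hy : IsSolutionAtLevel p N y) {t : ℝ} (ht : 0 < deriv y t) :
    slowness p N (y t) * deriv y t = 1 := by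
  rw [slowness, ← hy.sq_deriv t, sqrt_sq ht.le, inv_mul_cancel₀ ht.ne']

lemma timeMap_sub (hp : 1 < p) (hN : 0 < N) (hy : IsSolutionAtLevel p N y) {a b : ℝ}
    (hab : a ≤ b) (hpos : ∀ t ∈ Ioo a b, 0 < deriv y t) :
    timeMap p N (y b) - timeMap p N (y a) = b - a := by
  rcases hab.eq_or_lt with rfl | hlt
  · simp
  have hcont : ContinuousOn (fun t => timeMap p N (y t) - t) (Icc a b) :=
    ((continuousOn_timeMap hp hN).comp hy.isSolution.differentiable.continuous.continuousOn
      fun t _ => hy.mem_Icc hp hN t).sub continuousOn_id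
  have hderiv (t : ℝ) (ht : t ∈ Ioo a b) : HasDerivAt (fun t => timeMap p N (y t) - t) 0 t := by
    have hlt := hy.abs_lt_of_deriv_ne_zero hp hN (hpos t ht).ne'
    refine (((hasDerivAt_timeMap hp hN hlt).comp t (hy.isSolution.hasDerivAt t)).sub
      (hasDerivAt_id t)).congr_deriv ?_
    rw [hy.slowness_mul_deriv (hpos t ht), sub_self]
  obtain ⟨_, _, hslope⟩ := exists_hasDerivAt_eq_slope _ _ hlt hcont hderiv
  rw [eq_comm, div_eq_zero_iff, sub_eq_zero] at hslope
  rcases hslope with h | h <;> linarith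

lemma exists_deriv_nonpos (hp : 1 < p) (hN : 0 < N) (hy : IsSolutionAtLevel p N y) (a : ℝ) :
    ∃ t, a < t ∧ deriv y t ≤ 0 := by
  by_contra! hpos
  have hP : 0 ≤ timeMap p N N := timeMap_nonneg (by linarith)
  have htime := hy.timeMap_sub hp hN (b := a + timeMap p N N + 1) (by linarith)
    fun t ht => hpos t ht.1
  have hend := monotoneOn_timeMap hp hN (hy.mem_Icc hp hN _) (right_mem_Icc.2 (by linarith))
    (hy.mem_Icc hp hN (a + timeMap p N N + 1)).2
  have hstart := timeMap_nonneg (p := p) (hy.mem_Icc hp hN a).1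
  linarith

lemma exists_reach_top (hp : 1 < p) (hN : 0 < N) (hy : IsSolutionAtLevel p N y) {a : ℝ}
    (ha : ∀ᶠ t in 𝓝[>] a, 0 < deriv y t) :
    ∃ τ, a < τ ∧ (∀ t ∈ Ioo a τ, 0 < deriv y t) ∧ y τ = N ∧ deriv y τ = 0 := by
  obtain ⟨b, hab, hb⟩ := (mem_nhdsGT_iff_exists_Ioo_subset.1 ha)
  set S := Ici b ∩ deriv y ⁻¹' Iic 0
  have hS : S.Nonempty := by
    obtain ⟨t, hbt, ht⟩ := hy.exists_deriv_nonpos hp hN b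
    exact ⟨t, hbt.le, ht⟩
  have hSbdd : BddBelow S := ⟨b, fun t ht => ht.1⟩
  have hτS : sInf S ∈ S :=
    (isClosed_Ici.inter (isClosed_Iic.preimage hy.isSolution.continuous_deriv)).csInf_mem hS hSbdd
  have haτ : a < sInf S := hab.trans_le hτS.1
  have hpos (t : ℝ) (ht : t ∈ Ioo a (sInf S)) : 0 < deriv y t := by
    by_contra! hle
    rcases lt_or_ge t b with htb | hbt
    · exact hle.not_gt (hb ⟨ht.1, htb⟩)
    · exact ht.2.not_ge (csInf_le hSbdd ⟨hbt, hle⟩)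
  have hτ_nonneg : 0 ≤ deriv y (sInf S) := by
    have hclosure := (isClosed_le continuous_const hy.isSolution.continuous_deriv)
      |>.closure_subset_iff.2 fun t ht => (hpos t ht).le
    rw [closure_Ioo haτ.ne] at hclosure
    exact hclosure (right_mem_Icc.2 haτ.le)
  have hτ_zero : deriv y (sInf S) = 0 := le_antisymm hτS.2 hτ_nonneg
  have hrise : y a < y (sInf S) := hy.isSolution.strictMonoOn_of_deriv_pos hpos
    (left_mem_Icc.2 haτ.le) (right_mem_Icc.2 haτ.le) haτ
  refine ⟨sInf S, haτ, hpos, ?_, hτ_zero⟩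
  rcases (abs_eq hN.le).1 (hy.abs_eq_of_deriv_eq_zero hp hN hτ_zero) with h | h
  · exact h
  · linarith [(hy.mem_Icc hp hN a).1]

lemma swing_from_bottom (hp : 1 < p) (hN : 0 < N) (hy : IsSolutionAtLevel p N y) {a : ℝ}
    (h₀ : y a = -N) (h₁ : deriv y a = 0) :
    y (a + timeMap p N N) = N ∧ deriv y (a + timeMap p N N) = 0 ∧
      ∀ t ∈ Ioo a (a + timeMap p N N), |y t| < N := by
  have hacc : HasDerivAt (deriv y) (force p N) a := by
    simpa [h₀] using hy.isSolution.hasDerivAt_deriv a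
  have hforce : 0 < force p N := by unfold force; positivity
  obtain ⟨τ, haτ, hpos, hτ₀, hτ₁⟩ :=
    hy.exists_reach_top hp hN (by simpa [h₁] using hacc.eventually_nhdsGT_lt hforce)
  have htime := hy.timeMap_sub hp hN haτ.le hpos
  rw [hτ₀, h₀, timeMap_neg_self, sub_zero] at htime
  obtain rfl : τ = a + timeMap p N N := by linarith
  have hmono := hy.isSolution.strictMonoOn_of_deriv_pos hpos
  refine ⟨hτ₀, hτ₁, fun t ht => abs_lt.2 ⟨?_, ?_⟩⟩
  · exact h₀ ▸ hmono (left_mem_Icc.2 haτ.le) (Ioo_subset_Icc_self ht) ht.1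
  · exact hτ₀ ▸ hmono (Ioo_subset_Icc_self ht) (right_mem_Icc.2 haτ.le) ht.2

lemma swing_from_top (hp : 1 < p) (hN : 0 < N) (hy : IsSolutionAtLevel p N y) {a : ℝ}
    (h₀ : y a = N) (h₁ : deriv y a = 0) :
    y (a + 2 * timeMap p N N) = N ∧ deriv y (a + 2 * timeMap p N N) = 0 ∧
      ∀ t ∈ Ioo a (a + 2 * timeMap p N N), y t < N := by
  obtain ⟨hmid₀, hmid₁, hfirst⟩ :=
    hy.neg.swing_from_bottom hp hN (a := a) (by simp [h₀]) (by simp [deriv.neg, h₁])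
  simp only [Pi.neg_apply, deriv.neg, neg_eq_iff_eq_neg, neg_zero, abs_neg]
    at hmid₀ hmid₁ hfirst
  obtain ⟨hend₀, hend₁, hsecond⟩ := hy.swing_from_bottom hp hN hmid₀ hmid₁
  rw [two_mul, ← add_assoc]
  refine ⟨hend₀, hend₁, fun t ht => ?_⟩
  rcases lt_trichotomy t (a + timeMap p N N) with h | rfl | h
  · exact (abs_lt.1 (hfirst t ⟨ht.1, h⟩)).2
  · linarith
  · exact (abs_lt.1 (hsecond t ⟨h, ht.2⟩)).2

lemma exists_top (hp : 1 < p) (hN : 0 < N) (hy : IsSolutionAtLevel p N y) :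
    ∃ t, y t = N ∧ deriv y t = 0 := by
  have top_of_bottom {y : ℝ → ℝ} (hy : IsSolutionAtLevel p N y) {a : ℝ} (h₀ : y a = -N)
      (h₁ : deriv y a = 0) : ∃ t, y t = N ∧ deriv y t = 0 :=
    ⟨_, (hy.swing_from_bottom hp hN h₀ h₁).1, (hy.swing_from_bottom hp hN h₀ h₁).2.1⟩
  have reach {y : ℝ → ℝ} (hy : IsSolutionAtLevel p N y) (hpos : 0 < deriv y 0) :
      ∃ τ, y τ = N ∧ deriv y τ = 0 :=
    let ⟨τ, _, _, hτ⟩ := hy.exists_reach_top hp hN <| nhdsWithin_le_nhds <|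
      hy.isSolution.continuous_deriv.continuousAt.eventually (lt_mem_nhds hpos)
    ⟨τ, hτ⟩
  rcases lt_trichotomy (deriv y 0) 0 with hneg | hzero | hpos
  · obtain ⟨τ, hτ₀, hτ₁⟩ := reach hy.neg (by simpa [deriv.neg] using hneg)
    simp only [Pi.neg_apply, deriv.neg, neg_eq_iff_eq_neg, neg_zero] at hτ₀ hτ₁
    exact top_of_bottom hy hτ₀ hτ₁
  · rcases (abs_eq hN.le).1 (hy.abs_eq_of_deriv_eq_zero hp hN hzero) with h | h
    · exact ⟨0, h, hzero⟩
    · exact top_of_bottom hy h hzero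
  · exact reach hy hpos

end IsSolutionAtLevel

end Oscillator

open Oscillator

theorem minimal_period_and_amplitude_general (p : ℝ) (hp : 1 < p)
    (y : ℝ → ℝ) (hy : ContDiff ℝ 2 y)
    (hode : ∀ t : ℝ, deriv (deriv y) t + y t + |y t| ^ (p - 1) * y t = 0)
    (c : ℝ) (hc : c = deriv y 0 ^ 2 + y 0 ^ 2 + 2 / (p + 1) * |y 0| ^ (p + 1))
    (N : ℝ) (hN_pos : 0 < N) (hN : N ^ 2 + 2 / (p + 1) * N ^ (p + 1) = c)
    (L : ℝ)
    (hL : L = 4 * ∫ z in (0:ℝ)..1,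
      1 / Real.sqrt (1 - z ^ 2 + 2 / (p + 1) * N ^ (p - 1) * (1 - z ^ (p + 1)))) :
    -- c > 0
    0 < c ∧
    -- y is L-periodic
    Function.Periodic y L ∧
    -- L is the minimal period
    (∀ L' : ℝ, 0 < L' → L' < L → ¬ Function.Periodic y L') ∧
    -- max_{t∈ℝ} |y(t)| = N
    IsGreatest (Set.range fun t => |y t|) N := by
  have hcN : potential p N = c := by rw [potential, abs_of_pos hN_pos, hN]
  have hsol : IsSolution p y := ⟨hy, fun t => by rw [force]; linarith [hode t]⟩
  have hlevel : IsSolutionAtLevel p N y := ⟨hsol, fun t => by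
    rw [hsol.energy_eq hp t 0, hcN, hc, energy, potential]; ring⟩
  have hL2 : L = 2 * timeMap p N N := by rw [hL, timeMap_self_eq hp hN_pos]; ring
  obtain ⟨t₀, htop₀, htop₁⟩ := hlevel.exists_top hp hN_pos
  obtain ⟨hend₀, hend₁, hbelow⟩ := hlevel.swing_from_top hp hN_pos htop₀ htop₁
  subst hL2
  refine ⟨hcN ▸ potential_pos hp hN_pos.ne',
    hsol.periodic_of_eq_of_deriv_eq hp (hend₀.trans htop₀.symm) (hend₁.trans htop₁.symm),
    fun L' hL'₀ hL'L hper => ?_, ⟨⟨t₀, by simp [htop₀, hN_pos.le]⟩, ?_⟩⟩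
  · exact (hbelow (t₀ + L') ⟨by linarith, by linarith⟩).ne (by rw [hper t₀, htop₀])
  · rintro _ ⟨t, rfl⟩
    exact hlevel.abs_le hp hN_pos t

/-- Every nontrivial solution of `ÿ + y + |y|^{p-1}y = 0` with energy
`c = ẏ(0)² + y(0)² + (2/(p+1))|y(0)|^{p+1}` is periodic with minimal period
`L(c) = 4∫₀¹ dz/√(1 − z² + (2/(p+1))N(c)^{p−1}(1 − z^{p+1}))`, where `N(c) > 0` solves
`N(c)² + (2/(p+1))N(c)^{p+1} = c`, and its maximal amplitude is `N(c)`. -/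
theorem minimal_period_and_amplitude (p : ℝ) (hp : 1 < p)
    (y : ℝ → ℝ) (hy : ContDiff ℝ 2 y)
    (hode : ∀ t : ℝ, deriv (deriv y) t + y t + |y t| ^ (p - 1) * y t = 0)
    (hnontriv : (y 0, deriv y 0) ≠ (0, 0))
    (c : ℝ) (hc : c = deriv y 0 ^ 2 + y 0 ^ 2 + 2 / (p + 1) * |y 0| ^ (p + 1))
    (N : ℝ) (hN_pos : 0 < N) (hN : N ^ 2 + 2 / (p + 1) * N ^ (p + 1) = c)
    (L : ℝ)
    (hL : L = 4 * ∫ z in (0:ℝ)..1,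
      1 / Real.sqrt (1 - z ^ 2 + 2 / (p + 1) * N ^ (p - 1) * (1 - z ^ (p + 1)))) :
    -- c > 0
    0 < c ∧
    -- y is L-periodic
    Function.Periodic y L ∧
    -- L is the minimal period
    (∀ L' : ℝ, 0 < L' → L' < L → ¬ Function.Periodic y L') ∧
    -- max_{t∈ℝ} |y(t)| = N
    IsGreatest (Set.range fun t => |y t|) N :=
  minimal_period_and_amplitude_general p hp y hy hode c hc N hN_pos hN L hL
end
end
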